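/- arXiv:2311.10379 — 12 statements merged into one kernel-verified Lean document; each statement's English description precedes it below -/
import Mathlib

section
/- For every prime power q, the achromatic number of the unitary polarity graph G_{q²}^π equals q³, and its pseudo-achromatic number also equals q³. -/
/-- A complete partition of a graph `G` into `r` parts, encoded as a coloring
`c : V → Fin r` such that between any two distinct color classes there is an edge. -/
def IsCompletePartition {V : Type*} (G : SimpleGraph V) {r : ℕ} (c : V → Fin r) : Prop :=
  ∀ i j : Fin r, i ≠ j → ∃ u v : V, c u = i ∧ c v = j ∧ G.Adj u v

/-- The pseudo-achromatic number: the largest `r` such that `G` admits a complete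
partition into `r` parts. -/
noncomputable def pseudoAchromatic {V : Type*} (G : SimpleGraph V) : ℕ :=
  sSup {r : ℕ | ∃ c : V → Fin r, IsCompletePartition G c}

/-- The achromatic number: the largest `r` such that `G` admits a complete
partition into `r` independent parts. -/
noncomputable def achromatic {V : Type*} (G : SimpleGraph V) : ℕ :=
  sSup {r : ℕ | ∃ c : V → Fin r, IsCompletePartition G c ∧
    ∀ u v : V, c u = c v → ¬ G.Adj u v}

/-- The unitary polarity graph `G_{q²}^π`: vertices are pairs over the field of order `q²`,
with `(x, y)` adjacent to `(z, w)` iff they are distinct and `x * z^q = y + w^q`. -/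
def unitaryPolarityGraph (q : ℕ) (F : Type*) [Field F] : SimpleGraph (F × F) :=
  SimpleGraph.fromRel (fun u v => u.1 * v.1 ^ q = u.2 + v.2 ^ q)

/-!
Write `σ x = x ^ q` for the conjugation of `F = 𝔽_{q²}`. Since `σ` is an involutive ring
automorphism, the relation `x σz = y + σw` is symmetric, and it determines `w` from `x, y, z`:
every vertex has at most `q²` neighbours.

Upper bound: a complete partition into `r` parts has a dart from each part to each other part,
so `r (r - 1) ≤ q⁴ · q²`, i.e. `r ≤ q³`.

Lower bound: let `𝔽_q` be the fixed field of `σ` and `K = g 𝔽_q` for a generator `g` of `Fˣ`.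
Then `(s, t) ↦ s + σ t` is a bijection `K × K → F`, and we colour `(x, s + σ t)` by `(x, t)`,
which gives `q² · q` classes. Two vertices `(x, s + σ t)`, `(x, s' + σ t)` of one class can only
be adjacent if `s + σ s' = s' + σ s`, i.e. `s = s'`. The classes `(x, t) ≠ (z, t')` are joined by
the edge from `(x, s₀ + σ t)` to `(z, t₀ + σ t')`, where `s₀ + σ t₀ = x σz - σ t - t'`.
-/

open Finset

theorem le_of_mul_sub_one_le_sq {r n : ℕ} (hn : 0 < n) (h : r * (r - 1) ≤ n ^ 2) : r ≤ n := by
  by_contra! hr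
  have : (n + 1) * n ≤ r * (r - 1) := Nat.mul_le_mul hr (by omega)
  nlinarith

section CompletePartition

variable {V : Type*} {G : SimpleGraph V}

theorem IsCompletePartition.mul_pred_le_card_dart [Fintype V] [DecidableRel G.Adj] {r : ℕ}
    {c : V → Fin r} (hc : IsCompletePartition G c) : r * (r - 1) ≤ Fintype.card G.Dart := by
  classical
  calc r * (r - 1) = #(univ : Finset (Fin r)).offDiag := by
        simp [offDiag_card, Nat.mul_sub_one]
    _ ≤ #(univ.image fun d : G.Dart => (c d.fst, c d.snd)) := by
        refine card_le_card fun ij hij => ?_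
        obtain ⟨u, v, hu, hv, huv⟩ := hc ij.1 ij.2 (mem_offDiag.1 hij).2.2
        exact mem_image.2 ⟨⟨(u, v), huv⟩, mem_univ _, Prod.ext hu hv⟩
    _ ≤ Fintype.card G.Dart := card_image_le

theorem IsCompletePartition.mul_pred_le [Fintype V] [DecidableRel G.Adj] {r d : ℕ}
    {c : V → Fin r} (hc : IsCompletePartition G c) (hd : ∀ v, G.degree v ≤ d) :
    r * (r - 1) ≤ Fintype.card V * d :=
  calc r * (r - 1) ≤ Fintype.card G.Dart := hc.mul_pred_le_card_dart
    _ = ∑ v, G.degree v := G.dart_card_eq_sum_degrees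
    _ ≤ Fintype.card V * d := by simpa using sum_le_card_nsmul univ _ d fun v _ => hd v

theorem isCompletePartition_equiv_comp {ι : Type*} {r : ℕ} {c : V → ι} (e : ι ≃ Fin r)
    (hc : ∀ i j, i ≠ j → ∃ u v, c u = i ∧ c v = j ∧ G.Adj u v) :
    IsCompletePartition G (e ∘ c) := by
  intro i j hij
  obtain ⟨u, v, hu, hv, huv⟩ := hc (e.symm i) (e.symm j) (e.symm.injective.ne hij)
  exact ⟨u, v, by simp [hu], by simp [hv], huv⟩

theorem achromatic_eq_and_pseudoAchromatic_eq {n : ℕ}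
    (hc : ∃ c : V → Fin n, IsCompletePartition G c ∧ ∀ u v, c u = c v → ¬ G.Adj u v)
    (hle : ∀ r (c : V → Fin r), IsCompletePartition G c → r ≤ n) :
    achromatic G = n ∧ pseudoAchromatic G = n := by
  obtain ⟨c, hcomplete, hindep⟩ := hc
  exact ⟨IsGreatest.csSup_eq ⟨⟨c, hcomplete, hindep⟩, fun r ⟨c, hc, _⟩ => hle r c hc⟩,
    IsGreatest.csSup_eq ⟨⟨c, hcomplete⟩, fun r ⟨c, hc⟩ => hle r c hc⟩⟩

end CompletePartition

section PolarityGraph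

variable {R : Type*} [CommRing R] {σ : R →+* R}

def polarityGraph (σ : R →+* R) : SimpleGraph (R × R) :=
  SimpleGraph.fromRel fun u v => u.1 * σ v.1 = u.2 + σ v.2

theorem polarityGraph_rel_comm (hσ : Function.Involutive σ) (u v : R × R) :
    v.1 * σ u.1 = v.2 + σ u.2 ↔ u.1 * σ v.1 = u.2 + σ v.2 := by
  rw [← hσ.injective.eq_iff, map_mul, map_add, hσ u.1, hσ u.2, mul_comm, add_comm]

theorem polarityGraph_adj (hσ : Function.Involutive σ) {u v : R × R} :
    (polarityGraph σ).Adj u v ↔ u ≠ v ∧ u.1 * σ v.1 = u.2 + σ v.2 := by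
  rw [polarityGraph, SimpleGraph.fromRel_adj, polarityGraph_rel_comm hσ, or_self]

theorem polarityGraph_degree_le [Fintype R] [DecidableRel (polarityGraph σ).Adj]
    (hσ : Function.Involutive σ) (u : R × R) :
    (polarityGraph σ).degree u ≤ Fintype.card R := by
  classical
  rw [← SimpleGraph.card_neighborFinset_eq_degree, ← card_univ]
  refine (card_le_card fun v hv => ?_).trans
    (card_image_le (f := fun t => (t, σ u.1 * t - σ u.2)))
  rw [SimpleGraph.mem_neighborFinset, polarityGraph_adj hσ, ← polarityGraph_rel_comm hσ] at hv
  exact mem_image.2 ⟨v.1, mem_univ _, Prod.ext rfl (by linear_combination hv.2)⟩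

theorem IsCompletePartition.mul_pred_le_card_pow_three [Fintype R] (hσ : Function.Involutive σ)
    {r : ℕ} {c : R × R → Fin r} (hc : IsCompletePartition (polarityGraph σ) c) :
    r * (r - 1) ≤ Fintype.card R ^ 3 := by
  classical
  simpa [pow_succ, mul_assoc] using hc.mul_pred_le (polarityGraph_degree_le hσ)

variable {K : AddSubgroup R}

noncomputable def polarityColoring (hK : Function.Bijective fun st : K × K => (st.1 : R) + σ st.2)
    (u : R × R) : R × K :=
  (u.1, ((Equiv.ofBijective _ hK).symm u.2).2)

variable (hK : Function.Bijective fun st : K × K => (st.1 : R) + σ st.2)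
include hK

theorem polarityColoring_mk_add (x : R) (s t : K) : polarityColoring hK (x, s + σ t) = (x, t) := by
  rw [polarityColoring, ← Equiv.ofBijective_apply _ hK (s, t), Equiv.symm_apply_apply]

theorem polarityColoring_exists_adj (hσ : Function.Involutive σ) {i j : R × K} (hij : i ≠ j) :
    ∃ u v, polarityColoring hK u = i ∧ polarityColoring hK v = j ∧ (polarityGraph σ).Adj u v := by
  obtain ⟨x, t⟩ := i
  obtain ⟨z, t'⟩ := j
  obtain ⟨⟨s₀, t₀⟩, hst⟩ := hK.2 (x * σ z - σ t - t')
  refine ⟨(x, s₀ + σ t), (z, t₀ + σ t'), polarityColoring_mk_add hK ..,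
    polarityColoring_mk_add hK .., (polarityGraph_adj hσ).2 ⟨fun h => hij ?_, ?_⟩⟩
  · obtain ⟨rfl, hs⟩ := Prod.mk.inj h
    rw [(Prod.mk.inj (hK.1 (a₁ := (s₀, t)) (a₂ := (t₀, t')) hs)).2]
  · simp only [map_add, hσ t']
    linear_combination -hst

theorem not_adj_of_polarityColoring_eq (hσ : Function.Involutive σ) {u v : R × R}
    (h : polarityColoring hK u = polarityColoring hK v) : ¬ (polarityGraph σ).Adj u v := by
  obtain ⟨x, y⟩ := u
  obtain ⟨x', y'⟩ := v
  obtain ⟨rfl, ht⟩ := Prod.mk.inj h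
  dsimp only at ht
  intro hadj
  set d := Equiv.ofBijective _ hK
  have hy : y = (d.symm y).1 + σ (d.symm y).2 := (d.apply_symm_apply y).symm
  have hy' : y' = (d.symm y').1 + σ (d.symm y).2 := by
    rw [ht]; exact (d.apply_symm_apply y').symm
  have huv := (polarityGraph_adj hσ).1 hadj
  have hvu := (polarityGraph_adj hσ).1 hadj.symm
  rw [hy, hy'] at huv hvu
  simp only [map_add, hσ _] at huv hvu
  have hswap : d ((d.symm y).1, (d.symm y').1) = d ((d.symm y').1, (d.symm y).1) := by
    simp only [d, Equiv.ofBijective_apply]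
    linear_combination hvu.2 - huv.2
  have hs : (d.symm y).1 = (d.symm y').1 := (Prod.mk.inj (d.injective hswap)).1
  exact huv.1 (by rw [hs])

theorem exists_complete_independent_coloring_polarityGraph [Finite R]
    (hσ : Function.Involutive σ) :
    ∃ c : R × R → Fin (Nat.card R * Nat.card K), IsCompletePartition (polarityGraph σ) c ∧
      ∀ u v, c u = c v → ¬ (polarityGraph σ).Adj u v := by
  let e : R × K ≃ Fin (Nat.card R * Nat.card K) :=
    (Finite.equivFin (R × K)).trans (finCongr (Nat.card_prod R K))
  refine ⟨e ∘ polarityColoring hK, isCompletePartition_equiv_comp e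
    fun i j hij => polarityColoring_exists_adj hK hσ hij, fun u v huv => ?_⟩
  exact not_adj_of_polarityColoring_eq hK hσ (e.injective huv)

end PolarityGraph

section FiniteField

variable {F : Type*} [Field F] {q : ℕ} {σ : F →+* F}

theorem unitaryPolarityGraph_eq_polarityGraph (hσ : ∀ x, σ x = x ^ q) :
    unitaryPolarityGraph q F = polarityGraph σ := by
  simp only [unitaryPolarityGraph, polarityGraph, hσ]

theorem pow_sq_ne_sq_of_orderOf_eq (hq : 2 ≤ q) {g : F} (hg0 : g ≠ 0)
    (hg : orderOf g = q ^ 2 - 1) : (g ^ q) ^ 2 ≠ g ^ 2 := by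
  intro h
  obtain ⟨m, rfl⟩ : ∃ m, q = m + 1 := ⟨q - 1, by omega⟩
  have h1 : g ^ (2 * m) = 1 := by
    apply mul_right_cancel₀ (pow_ne_zero 2 hg0)
    rw [← pow_add, one_mul, ← h, ← pow_mul]
    ring_nf
  have h2 := Nat.le_of_dvd (by omega) (hg ▸ orderOf_dvd_of_pow_eq_one h1)
  have : 2 * m < (m + 1) ^ 2 - 1 := by
    rw [Nat.lt_sub_iff_add_lt]; nlinarith
  omega

variable [Fintype F]

theorem exists_orderOf_eq_card_sub_one : ∃ g : F, g ≠ 0 ∧ orderOf g = Fintype.card F - 1 := by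
  obtain ⟨g, hg⟩ := IsCyclic.exists_ofOrder_eq_natCard (α := Fˣ)
  exact ⟨g, g.ne_zero, by rw [orderOf_units, hg, Nat.card_units, Nat.card_eq_fintype_card]⟩

theorem exists_ringHom_eq_pow (hq : IsPrimePow q) (hF : Fintype.card F = q ^ 2) :
    ∃ σ : F →+* F, ∀ x, σ x = x ^ q := by
  obtain ⟨p, k, hp, -, rfl⟩ := hq
  have := Fact.mk hp.nat_prime
  have := charP_of_card_eq_prime_pow (hF.trans (pow_mul p k 2).symm)
  exact ⟨iterateFrobenius F p k, fun x => iterateFrobenius_def ..⟩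

variable (hF : Fintype.card F = q ^ 2) (hσ : ∀ x, σ x = x ^ q)
include hF hσ

theorem involutive_of_eq_pow : Function.Involutive σ := fun x => by
  rw [hσ, hσ, ← pow_mul, ← sq, ← hF, FiniteField.pow_card]

theorem le_card_eqLocus (hq : 2 ≤ q) {g : F} (hg0 : g ≠ 0) (hg : orderOf g = q ^ 2 - 1) :
    q ≤ Nat.card (σ.eqLocus (RingHom.id F)) := by
  classical
  -- `0` and the powers of the norm `g ^ (q + 1) = g * σ g`, of order `q - 1`, are fixed by `σ`
  have hfix : g ^ (q + 1) ∈ σ.eqLocus (RingHom.id F) := by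
    rw [RingHom.mem_eqLocus, RingHom.id_apply, pow_succ, map_mul, ← hσ,
      involutive_of_eq_pow hF hσ, mul_comm]
  set h := g ^ (q + 1)
  have hq1 : q ^ 2 - 1 = (q + 1) * (q - 1) := by simpa using Nat.sq_sub_sq q 1
  have hh : orderOf h = q - 1 := by
    rw [orderOf_pow_of_dvd (by omega) (by rw [hg, hq1]; exact dvd_mul_right _ _), hg, hq1,
      Nat.mul_div_cancel_left _ (by omega)]
  have hh0 : h ≠ 0 := pow_ne_zero _ hg0
  set S := insert 0 ((range (q - 1)).image (h ^ ·))
  have hS : #S = q := by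
    rw [card_insert_of_notMem (by simp [hh0]),
      card_image_of_injOn (by rw [coe_range, ← hh]; exact pow_injOn_Iio_orderOf), card_range]
    omega
  have hSfix : (S : Set F) ⊆ σ.eqLocus (RingHom.id F) := by
    intro x hx
    simp only [S, coe_insert, coe_image, Set.mem_insert_iff, Set.mem_image] at hx
    obtain rfl | ⟨i, -, rfl⟩ := hx
    · exact zero_mem _
    · exact pow_mem hfix i
  calc q = Nat.card S := by rw [Nat.card_eq_finsetCard, hS]
    _ ≤ _ := Nat.card_mono (Set.toFinite _) hSfix

theorem exists_addSubgroup_bijective_add_map :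
    ∃ K : AddSubgroup F, Function.Bijective fun st : K × K => (st.1 : F) + σ st.2 := by
  have hq : 2 ≤ q := by
    have := hF ▸ Fintype.one_lt_card (α := F)
    nlinarith
  have hinv := involutive_of_eq_pow hF hσ
  obtain ⟨g, hg0, hg⟩ := exists_orderOf_eq_card_sub_one (F := F)
  rw [hF] at hg
  let K := (σ.eqLocus (RingHom.id F)).toAddSubgroup.map (AddMonoidHom.mulLeft g)
  have hσg : σ g ≠ 0 := (map_ne_zero σ).2 hg0
  -- for `a, b ∈ 𝔽_q` with `a ≠ 0`, `g a + σ g b = 0` would force `g ^ 2 = (σ g) ^ 2`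
  have hsum : ∀ s ∈ K, ∀ t ∈ K, s + σ t = 0 → s = 0 ∧ t = 0 := by
    rintro _ ⟨a, ha, rfl⟩ _ ⟨b, hb, rfl⟩ h
    replace ha : σ a = a := ha
    replace hb : σ b = b := hb
    simp only [AddMonoidHom.coe_mulLeft, map_mul, hb] at h ⊢
    have h' : σ g * a + g * b = 0 := by
      simpa [hinv g, ha, hb] using congrArg σ h
    have ha0 : a = 0 := by
      have : (g ^ 2 - σ g ^ 2) * a = 0 := by linear_combination g * h - σ g * h'
      refine (mul_eq_zero.1 this).resolve_left (sub_ne_zero.2 ?_)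
      rw [hσ]; exact (pow_sq_ne_sq_of_orderOf_eq hq hg0 hg).symm
    subst ha0
    simpa [hg0, hσg] using h
  have hinj : Function.Injective fun st : K × K => (st.1 : F) + σ st.2 := by
    rintro ⟨s, t⟩ ⟨s', t'⟩ h
    obtain ⟨hs, ht⟩ := hsum (s - s') (sub_mem s.2 s'.2) (t - t') (sub_mem t.2 t'.2)
      (by simp only at h; rw [map_sub]; linear_combination h)
    exact Prod.ext (Subtype.ext (sub_eq_zero.1 hs)) (Subtype.ext (sub_eq_zero.1 ht))
  refine ⟨K, hinj.bijective_of_nat_card_le ?_⟩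
  have hK : q ≤ Nat.card K := by
    rw [AddSubgroup.card_map_of_injective (mul_right_injective₀ hg0)]
    exact le_card_eqLocus hF hσ hq hg0 hg
  rw [Nat.card_prod, Nat.card_eq_fintype_card, hF, sq]
  exact Nat.mul_le_mul hK hK

end FiniteField

theorem achromatic_and_pseudoAchromatic_unitaryPolarityGraph
    (q : ℕ) (hq : IsPrimePow q) (F : Type*) [Field F] [Fintype F]
    (hF : Fintype.card F = q ^ 2) :
    achromatic (unitaryPolarityGraph q F) = q ^ 3 ∧
    pseudoAchromatic (unitaryPolarityGraph q F) = q ^ 3 := by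
  obtain ⟨σ, hσ⟩ := exists_ringHom_eq_pow hq hF
  have hinv := involutive_of_eq_pow hF hσ
  obtain ⟨K, hK⟩ := exists_addSubgroup_bijective_add_map hF hσ
  have hKcard : Nat.card K = q := by
    have := Nat.card_eq_of_bijective _ hK
    rw [Nat.card_prod, Nat.card_eq_fintype_card (α := F), hF, ← sq] at this
    exact Nat.pow_left_injective two_ne_zero this
  have hcolors : Nat.card F * Nat.card K = q ^ 3 := by
    rw [Nat.card_eq_fintype_card, hF, hKcard]; ring
  rw [unitaryPolarityGraph_eq_polarityGraph hσ]
  refine achromatic_eq_and_pseudoAchromatic_eq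
    (hcolors ▸ exists_complete_independent_coloring_polarityGraph hK hinv) fun r c hc => ?_
  have hq0 : 0 < q := Nat.pos_of_ne_zero (by rintro rfl; simp at hF)
  have := hc.mul_pred_le_card_pow_three hinv
  rw [hF, ← pow_mul, show 2 * 3 = 3 * 2 from rfl, pow_mul] at this
  exact le_of_mul_sub_one_le_sq (pow_pos hq0 3) this
end

section
/- Let q be a prime power and let β ∈ F_{q²} be such that {β, β^q} is a basis of F_{q²} over F_q. For x ∈ F_{q²} and y ∈ F_q, set V_{x,y} = {(x, aβ + yβ^q) : a ∈ F_q}. Then the q³ sets V_{x,y} partition the vertex set F_{q²} × F_{q²} of the unitary polarity graph G_{q²}^π into parts of size q, each part V_{x,y} is an independent set of G_{q²}^π, and for any two distinct parts there is exactly one edge of G_{q²}^π with one endpoint in each part. -/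
/-- The part `V_{x,y} = {(x, a•β + y•β^q) : a ∈ F_q}`. -/
def unitaryPart {K F : Type*} [Field K] [Field F] [Algebra K F]
    (q : ℕ) (β : F) (x : F) (y : K) : Set (F × F) :=
  {v : F × F | v.1 = x ∧ ∃ a : K, v.2 = a • β + y • β ^ q}

theorem unitaryPolarityGraph_partition
    (q : ℕ) (hq : IsPrimePow q)
    (K F : Type*) [Field K] [Field F] [Algebra K F] [Fintype K] [Fintype F]
    (hK : Fintype.card K = q) (hF : Fintype.card F = q ^ 2)
    (β : F)
    (hβ : Function.Bijective (fun ab : K × K => ab.1 • β + ab.2 • β ^ q)) :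
    -- the sets `V_{x,y}` partition the vertex set `F × F`
    (∀ v : F × F, ∃! xy : F × K, v ∈ unitaryPart q β xy.1 xy.2) ∧
    -- each part has exactly `q` elements
    (∀ (x : F) (y : K), (unitaryPart q β x y).ncard = q) ∧
    -- each part is an independent set
    (∀ (x : F) (y : K), ∀ u ∈ unitaryPart q β x y, ∀ w ∈ unitaryPart q β x y,
        ¬ (unitaryPolarityGraph q F).Adj u w) ∧
    -- between any two distinct parts there is exactly one edge
    (∀ (x : F) (y : K) (z : F) (w : K), (x, y) ≠ (z, w) →
        ∃! e : (F × F) × (F × F),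
          e.1 ∈ unitaryPart q β x y ∧ e.2 ∈ unitaryPart q β z w ∧
          (unitaryPolarityGraph q F).Adj e.1 e.2) := by
  classical
  obtain ⟨p, k, hp, hk, hpk⟩ := hq
  have hp' : p.Prime := hp.nat_prime
  -- characteristic of F is p
  obtain ⟨c, hc⟩ := CharP.exists F
  haveI := hc
  obtain ⟨n, hcprime, hn⟩ := FiniteField.card F c
  have hcp : c = p := by
    have hdvd : c ∣ p ^ (k * 2) := by
      have : c ^ (n : ℕ) = p ^ (k * 2) := by
        rw [← hn, hF, ← hpk, ← pow_mul]
      exact this ▸ dvd_pow_self c n.2.ne'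
    exact (Nat.prime_dvd_prime_iff_eq hcprime hp').mp (hcprime.dvd_of_dvd_pow hdvd)
  subst hcp
  haveI : Fact c.Prime := ⟨hcprime⟩
  -- basic arithmetic facts
  have hadd : ∀ s t : F, (s + t) ^ q = s ^ q + t ^ q := by
    intro s t
    rw [← hpk]
    exact add_pow_char_pow ..
  have hqq : ∀ s : F, (s ^ q) ^ q = s := by
    intro s
    rw [← pow_mul, ← sq, ← hF]
    exact FiniteField.pow_card s
  have hsmul : ∀ (a : K) (s : F), (a • s) ^ q = a • s ^ q := by
    intro a s
    rw [Algebra.smul_def, mul_pow, ← map_pow, Algebra.smul_def]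
    congr 2
    rw [← hK]
    exact FiniteField.pow_card a
  -- the Frobenius swaps the coordinates
  have hconj : ∀ (a b : K), (a • β + b • β ^ q) ^ q = b • β + a • β ^ q := by
    intro a b
    rw [hadd, hsmul, hsmul, hqq, add_comm]
  have hkey : ∀ a y c w : K,
      (a • β + y • β ^ q) + (c • β + w • β ^ q) ^ q = (a + w) • β + (y + c) • β ^ q := by
    intro a y c w
    rw [hconj, add_smul, add_smul]
    ring
  -- injectivity of coordinates
  have hinj : ∀ a y a' y' : K, a • β + y • β ^ q = a' • β + y' • β ^ q →
      a = a' ∧ y = y' := by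
    intro a y a' y' h
    have := hβ.injective (a₁ := (a, y)) (a₂ := (a', y')) h
    exact ⟨congrArg Prod.fst this, congrArg Prod.snd this⟩
  set E := Equiv.ofBijective _ hβ with hE
  have hrep : ∀ s : F, s = (E.symm s).1 • β + (E.symm s).2 • β ^ q := by
    intro s
    exact (E.apply_symm_apply s).symm
  refine ⟨?_, ?_, ?_, ?_⟩
  · -- partition
    intro v
    refine ⟨(v.1, (E.symm v.2).2), ⟨rfl, (E.symm v.2).1, hrep v.2⟩, ?_⟩
    rintro ⟨x', y'⟩ ⟨h1, a', h2⟩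
    have h3 := (hrep v.2).symm.trans h2
    obtain ⟨-, h5⟩ := hinj _ _ _ _ h3
    exact Prod.ext h1.symm h5.symm
  · -- cardinality
    intro x y
    have himg : unitaryPart q β x y = (fun a : K => (x, a • β + y • β ^ q)) '' Set.univ := by
      ext ⟨u1, u2⟩
      constructor
      · rintro ⟨h1, a, h2⟩
        exact ⟨a, trivial, by simp [h1.symm, h2.symm]⟩
      · rintro ⟨a, -, h⟩
        obtain ⟨h1, h2⟩ := Prod.mk.injEq .. ▸ h
        exact ⟨h1.symm, a, h2.symm⟩
    have hfinj : Function.Injective (fun a : K => (x, a • β + y • β ^ q)) := by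
      intro a a' h
      have h2 : a • β + y • β ^ q = a' • β + y • β ^ q := congrArg Prod.snd h
      exact (hinj _ _ _ _ h2).1
    rw [himg, Set.ncard_image_of_injective _ hfinj, Set.ncard_univ,
      Nat.card_eq_fintype_card, hK]
  · -- independence
    intro x y u hu w hw hadj
    obtain ⟨hu1, a, hu2⟩ := hu
    obtain ⟨hw1, c, hw2⟩ := hw
    rw [unitaryPolarityGraph, SimpleGraph.fromRel_adj] at hadj
    obtain ⟨hne, hrel⟩ := hadj
    have hfix : (x * x ^ q) ^ q = x * x ^ q := by
      rw [mul_pow, hqq]; ring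
    have hac : a = c := by
      rcases hrel with h | h
      · rw [hu1, hw1, hu2, hw2, hkey] at h
        have h2 : x * x ^ q = (y + c) • β + (a + y) • β ^ q := by
          rw [← hfix, h, hconj]
        obtain ⟨h3, -⟩ := hinj _ _ _ _ (h.symm.trans h2)
        rw [add_comm y c] at h3
        exact add_right_cancel h3
      · rw [hu1, hw1, hu2, hw2, hkey] at h
        have h2 : x * x ^ q = (y + a) • β + (c + y) • β ^ q := by
          rw [← hfix, h, hconj]
        obtain ⟨h3, -⟩ := hinj _ _ _ _ (h.symm.trans h2)
        rw [add_comm y a] at h3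
        exact (add_right_cancel h3).symm
    apply hne
    have : u.2 = w.2 := by rw [hu2, hw2, hac]
    exact Prod.ext (hu1.trans hw1.symm) this
  · -- unique edge between distinct parts
    intro x y z w hne
    set m := (E.symm (x * z ^ q)).1 with hm
    set n := (E.symm (x * z ^ q)).2 with hn'
    have hmn : x * z ^ q = m • β + n • β ^ q := hrep _
    have hzx : z * x ^ q = n • β + m • β ^ q := by
      have h1 : (x * z ^ q) ^ q = z * x ^ q := by
        rw [mul_pow, hqq]; ring
      rw [← h1, hmn, hconj]
    refine ⟨((x, (m - w) • β + y • β ^ q), (z, (n - y) • β + w • β ^ q)),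
      ⟨⟨rfl, m - w, rfl⟩, ⟨rfl, n - y, rfl⟩, ?_⟩, ?_⟩
    · rw [unitaryPolarityGraph, SimpleGraph.fromRel_adj]
      constructor
      · intro h
        obtain ⟨h1, h2⟩ := Prod.mk.injEq .. ▸ h
        obtain ⟨-, h4⟩ := hinj _ _ _ _ h2
        exact hne (Prod.ext h1 h4)
      · left
        show x * z ^ q = _ + _
        rw [hkey, sub_add_cancel, add_sub_cancel, hmn]
    · rintro ⟨⟨u1, u2⟩, ⟨v1, v2⟩⟩ ⟨⟨hu1, a, hu2⟩, ⟨hv1, c, hv2⟩, hadj⟩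
      simp only at hu1 hu2 hv1 hv2
      rw [unitaryPolarityGraph, SimpleGraph.fromRel_adj] at hadj
      obtain ⟨-, hrel⟩ := hadj
      have hac : a = m - w ∧ c = n - y := by
        rcases hrel with h | h
        · simp only [hu1, hv1, hu2, hv2] at h
          rw [hkey] at h
          obtain ⟨h1, h2⟩ := hinj _ _ _ _ (hmn.symm.trans h)
          constructor
          · rw [h1]; ring
          · rw [h2]; ring
        · simp only [hu1, hv1, hu2, hv2] at h
          rw [hkey] at h
          obtain ⟨h1, h2⟩ := hinj _ _ _ _ (hzx.symm.trans h)
          constructor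
          · rw [h2]; ring
          · rw [h1]; ring
      simp only [Prod.mk.injEq]
      exact ⟨⟨hu1, by rw [hu2, hac.1]⟩, hv1, by rw [hv2, hac.2]⟩
end

section
/- For every prime power q, the number of edges of the unitary polarity graph G_{q²}^π equals (q⁶ − q³)/2, i.e., the binomial coefficient C(q³, 2). -/
open Finset

theorem SimpleGraph.two_mul_ncard_edgeSet_fromRel_add_card_filter {V : Type*} [Fintype V]
    {r : V → V → Prop} [DecidableRel r] (hr : ∀ u v, r u v → r v u) :
    2 * (fromRel r).edgeSet.ncard + #{v | r v v} = #{p : V × V | r p.1 p.2} := by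
  classical
  let arcs : Finset (V × V) := {p | (fromRel r).Adj p.1 p.2}
  let diag : Finset (V × V) := {p | p.1 = p.2 ∧ r p.1 p.2}
  have hsplit : ({p | r p.1 p.2} : Finset (V × V)) = arcs ∪ diag := by
    ext p
    simp only [arcs, diag, mem_filter, mem_univ, true_and, mem_union, fromRel_adj]
    have := hr p.1 p.2
    tauto
  have hdisj : Disjoint arcs diag :=
    disjoint_filter.2 fun _ _ hadj hloop => hadj.ne hloop.1
  have hloops : #{v | r v v} = #diag := by
    refine card_nbij' (fun v => (v, v)) Prod.fst ?_ ?_ ?_ ?_ <;> intro <;> aesop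
  rw [hsplit, card_union_of_disjoint hdisj, ← two_mul_card_edgeFinset, hloops,
    ← coe_edgeFinset, Set.ncard_coe_finset]

theorem card_filter_pow_eq_mul_add_le {R : Type*} [CommRing R] [IsDomain R] [Fintype R]
    [DecidableEq R] {q : ℕ} (hq : 2 ≤ q) (b c : R) : #{a : R | a ^ q = b * a + c} ≤ q := by
  open Polynomial in
  set P : R[X] := X ^ q - (C b * X + C c)
  have hdeg : P.natDegree = q := by
    rw [natDegree_sub_eq_left_of_natDegree_lt] <;> simp only [natDegree_X_pow]
    exact (natDegree_linear_le).trans_lt hq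
  have hP : P ≠ 0 := fun h => by rw [h, natDegree_zero] at hdeg; omega
  refine hdeg ▸ card_le_degree_of_subset_roots fun a ha => ?_
  simp_all [P, sub_eq_zero]

theorem Finset.forall_eq_of_sum_eq_mul_self {ι : Type*} {s : Finset ι} {f : ι → ℕ} {k : ℕ}
    (hs : #s ≤ k) (hf : ∀ i ∈ s, f i ≤ k) (hsum : ∑ i ∈ s, f i = k * k) : ∀ i ∈ s, f i = k := by
  refine (sum_eq_sum_iff_of_le hf).1 (le_antisymm (sum_le_sum hf) ?_)
  rw [sum_const, smul_eq_mul, hsum]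
  exact Nat.mul_le_mul_right k hs

section CardEqSq

variable {F : Type*} [Field F] [Fintype F] {q : ℕ}

theorem isPrimePow_of_card_eq_sq (hF : Fintype.card F = q ^ 2) : IsPrimePow q :=
  (isPrimePow_pow_iff two_ne_zero).mp (hF ▸ FiniteField.isPrimePow_card F)

theorem add_pow_of_card_eq_sq (hF : Fintype.card F = q ^ 2) (a b : F) :
    (a + b) ^ q = a ^ q + b ^ q := by
  obtain ⟨p, k, hp, -, rfl⟩ := isPrimePow_of_card_eq_sq hF
  have := Fact.mk hp.nat_prime
  have : CharP F p := by
    rw [CharP.charP_iff_prime_eq_zero hp.nat_prime]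
    have := FiniteField.cast_card_eq_zero F
    rw [hF] at this
    push_cast at this
    exact eq_zero_of_pow_eq_zero (eq_zero_of_pow_eq_zero this)
  exact add_pow_char_pow a b p k

theorem pow_pow_of_card_eq_sq (hF : Fintype.card F = q ^ 2) (a : F) : (a ^ q) ^ q = a := by
  rw [← pow_mul, ← sq, ← hF, FiniteField.pow_card]

theorem mul_pow_eq_add_pow_symm (hF : Fintype.card F = q ^ 2) {x y z w : F}
    (h : x * z ^ q = y + w ^ q) : z * x ^ q = w + y ^ q := by
  have := congrArg (· ^ q) h
  simp only [mul_pow, add_pow_of_card_eq_sq hF, pow_pow_of_card_eq_sq hF] at this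
  rw [mul_comm, this, add_comm]

variable [DecidableEq F]

theorem card_filter_add_pow_eq (hF : Fintype.card F = q ^ 2) {a : F} (ha : a ^ q = a) :
    #{y : F | y + y ^ q = a} = q := by
  have hq := (isPrimePow_of_card_eq_sq hF).two_le
  have hfixed : #{b : F | b ^ q = b} ≤ q := by
    simpa using card_filter_pow_eq_mul_add_le hq (1 : F) 0
  have hfiber (b : F) : #{y : F | y + y ^ q = b} ≤ q := by
    convert card_filter_pow_eq_mul_add_le hq (-1 : F) b using 3
    constructor <;> intro h <;> linear_combination h
  have htrace_mem : ∀ y ∈ (univ : Finset F), y + y ^ q ∈ ({b | b ^ q = b} : Finset F) := by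
    intro y _
    simp only [mem_filter, mem_univ, true_and, add_pow_of_card_eq_sq hF,
      pow_pow_of_card_eq_sq hF, add_comm]
  have hsum := card_eq_sum_card_fiberwise htrace_mem
  rw [card_univ, hF, sq] at hsum
  exact forall_eq_of_sum_eq_mul_self hfixed (fun b _ => by simpa using hfiber b) hsum.symm a
    (by simpa using ha)

theorem card_filter_mul_pow_eq_add_pow_self (hF : Fintype.card F = q ^ 2) :
    #{u : F × F | u.1 * u.1 ^ q = u.2 + u.2 ^ q} = q ^ 3 := by
  have hnorm (x : F) : (x * x ^ q) ^ q = x * x ^ q := by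
    rw [mul_pow, pow_pow_of_card_eq_sq hF, mul_comm]
  rw [card_filter, Fintype.sum_prod_type]
  simp only [← card_filter, eq_comm (a := _ * _), card_filter_add_pow_eq hF (hnorm _), sum_const,
    card_univ, hF, smul_eq_mul]
  ring

theorem card_filter_mul_pow_eq_add_pow (hF : Fintype.card F = q ^ 2) (x y : F) :
    #{v : F × F | x * v.1 ^ q = y + v.2 ^ q} = q ^ 2 := by
  have hunique (z : F) : #{w : F | x * z ^ q = y + w ^ q} = 1 := by
    refine card_eq_one.2 ⟨(x * z ^ q - y) ^ q, ?_⟩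
    ext w
    simp only [mem_filter, mem_univ, true_and, mem_singleton]
    constructor
    · intro h
      rw [h, add_sub_cancel_left, pow_pow_of_card_eq_sq hF]
    · rintro rfl
      rw [pow_pow_of_card_eq_sq hF, add_sub_cancel]
  rw [card_filter, Fintype.sum_prod_type]
  simp only [← card_filter, hunique, sum_const, card_univ, hF, smul_eq_mul, mul_one]

end CardEqSq

theorem card_edgeSet_unitaryPolarityGraph_general
    (q : ℕ) (F : Type*) [Field F] [Fintype F]
    (hF : Fintype.card F = q ^ 2) :
    (unitaryPolarityGraph q F).edgeSet.ncard = (q ^ 6 - q ^ 3) / 2 ∧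
    (unitaryPolarityGraph q F).edgeSet.ncard = Nat.choose (q ^ 3) 2 := by
  classical
  have harcs : #{p : (F × F) × (F × F) | p.1.1 * p.2.1 ^ q = p.1.2 + p.2.2 ^ q} = q ^ 6 := by
    rw [card_filter, Fintype.sum_prod_type]
    simp only [← card_filter, card_filter_mul_pow_eq_add_pow hF, sum_const, card_univ,
      Fintype.card_prod, hF, smul_eq_mul]
    ring
  have hedges : 2 * (unitaryPolarityGraph q F).edgeSet.ncard + q ^ 3 = q ^ 6 := by
    rw [← card_filter_mul_pow_eq_add_pow_self hF, ← harcs]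
    exact SimpleGraph.two_mul_ncard_edgeSet_fromRel_add_card_filter
      fun _ _ => mul_pow_eq_add_pow_symm hF
  have hsq : q ^ 3 * q ^ 3 = q ^ 6 := by ring
  refine ⟨by omega, ?_⟩
  rw [Nat.choose_two_right, Nat.mul_sub_one, hsq]
  omega

theorem card_edgeSet_unitaryPolarityGraph
    (q : ℕ) (hq : IsPrimePow q) (F : Type*) [Field F] [Fintype F]
    (hF : Fintype.card F = q ^ 2) :
    (unitaryPolarityGraph q F).edgeSet.ncard = (q ^ 6 - q ^ 3) / 2 ∧
    (unitaryPolarityGraph q F).edgeSet.ncard = Nat.choose (q ^ 3) 2 :=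
  card_edgeSet_unitaryPolarityGraph_general q F hF
end

section
/- For every prime power q, the unitary polarity graph G_{q²}^π contains no cycle of length 4 and admits a complete partition into q³ parts each of size exactly q; consequently f(q³, C₄) ≤ q, where C₄ is the 4-cycle. -/
/-- The cycle on `n` vertices (for `n ≥ 3`). -/
def cycGraph (n : ℕ) : SimpleGraph (ZMod n) :=
  SimpleGraph.fromRel (fun i j => j = i + 1)

/-- `G` contains a subgraph isomorphic to `H`, i.e., there is an injective
graph homomorphism from `H` to `G`. -/
def ContainsCopy {α β : Type*} (H : SimpleGraph α) (G : SimpleGraph β) : Prop :=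
  ∃ f : H →g G, Function.Injective f

/-- `f(r, C₄)`: the least `k` such that some `C₄`-free graph admits a complete
partition into `r` parts each of size at most `k`. -/
noncomputable def fC4 (r : ℕ) : ℕ :=
  sInf {k : ℕ | ∃ (n : ℕ) (G : SimpleGraph (Fin n)),
    ¬ ContainsCopy (cycGraph 4) G ∧
    ∃ c : Fin n → Fin r, IsCompletePartition G c ∧
      ∀ i : Fin r, {v : Fin n | c v = i}.ncard ≤ k}

theorem unitaryPolarityGraph_C4_free_and_fC4_le
    (q : ℕ) (hq : IsPrimePow q) (F : Type*) [Field F] [Fintype F]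
    (hF : Fintype.card F = q ^ 2) :
    ¬ ContainsCopy (cycGraph 4) (unitaryPolarityGraph q F) ∧
    (∃ c : F × F → Fin (q ^ 3), IsCompletePartition (unitaryPolarityGraph q F) c ∧
      ∀ i : Fin (q ^ 3), {v : F × F | c v = i}.ncard = q) ∧
    fC4 (q ^ 3) ≤ q := by
  classical
  have hq2 : 2 ≤ q := hq.two_le
  have hq1 : 1 ≤ q := by omega
  have hq0 : q ≠ 0 := by omega
  -- characteristic
  obtain ⟨p, k, hpp, hk, hpk⟩ := hq
  have hp : p.Prime := hpp.nat_prime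
  haveI : Fact p.Prime := ⟨hp⟩
  haveI hchar : CharP F p := by
    obtain ⟨n, hrp, hcard⟩ := FiniteField.card F (ringChar F)
    have hr : ringChar F = p := by
      have h1 : ringChar F ∣ p ^ (k * 2) := by
        have h2 : Fintype.card F = p ^ (k * 2) := by rw [hF, ← hpk, ← pow_mul]
        rw [← h2, hcard]
        exact dvd_pow_self _ n.pos.ne'
      exact ((Nat.prime_dvd_prime_iff_eq hrp hp).mp (hrp.dvd_of_dvd_pow h1))
    exact hr ▸ ringChar.charP F
  -- Frobenius facts
  have hadd : ∀ x y : F, (x + y) ^ q = x ^ q + y ^ q := fun x y => by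
    rw [← hpk]; exact add_pow_char_pow ..
  have hsub : ∀ x y : F, (x - y) ^ q = x ^ q - y ^ q := fun x y => by
    rw [← hpk]; exact sub_pow_char_pow ..
  have hqq : ∀ x : F, (x ^ q) ^ q = x := fun x => by
    rw [← pow_mul, ← pow_two, ← hF, FiniteField.pow_card]
  have hfrobinj : ∀ x y : F, x ^ q = y ^ q → x = y := fun x y h => by
    rw [← hqq x, h, hqq]
  set G := unitaryPolarityGraph q F with hG
  -- adjacency normal form
  have hAdj : ∀ u v : F × F, G.Adj u v ↔ u ≠ v ∧ u.1 * v.1 ^ q = u.2 + v.2 ^ q := by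
    intro u v
    rw [hG, unitaryPolarityGraph, SimpleGraph.fromRel_adj]
    constructor
    · rintro ⟨hne, h | h⟩
      · exact ⟨hne, h⟩
      · refine ⟨hne, ?_⟩
        have := congrArg (· ^ q) h
        simp only [mul_pow, hadd] at this
        rw [hqq, hqq] at this
        rw [mul_comm] at this
        rw [this, add_comm]
      -- from v.1 * u.1^q = v.2 + u.2^q derive u.1 * v.1^q = u.2 + v.2^q
    · rintro ⟨hne, h⟩
      exact ⟨hne, Or.inl h⟩
  -- Part 1 : C4-free
  have part1 : ¬ ContainsCopy (cycGraph 4) G := by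
    rintro ⟨f, hfinj⟩
    have hadj01 : (cycGraph 4).Adj 0 1 := by
      rw [cycGraph, SimpleGraph.fromRel_adj]; decide
    have hadj12 : (cycGraph 4).Adj 1 2 := by
      rw [cycGraph, SimpleGraph.fromRel_adj]; decide
    have hadj23 : (cycGraph 4).Adj 2 3 := by
      rw [cycGraph, SimpleGraph.fromRel_adj]; decide
    have hadj30 : (cycGraph 4).Adj 3 0 := by
      rw [cycGraph, SimpleGraph.fromRel_adj]; decide
    set a := f 0; set b := f 1; set cc := f 2; set d := f 3
    have hac : a ≠ cc := fun h => by
      have := hfinj h; exact absurd this (by decide)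
    have hbd : b ≠ d := fun h => by
      have := hfinj h; exact absurd this (by decide)
    have E1 : b.1 * a.1 ^ q = b.2 + a.2 ^ q := ((hAdj b a).mp (f.map_rel hadj01).symm).2
    have E2 : b.1 * cc.1 ^ q = b.2 + cc.2 ^ q := ((hAdj b cc).mp (f.map_rel hadj12)).2
    have E3 : d.1 * a.1 ^ q = d.2 + a.2 ^ q := ((hAdj d a).mp (f.map_rel hadj30)).2
    have E4 : d.1 * cc.1 ^ q = d.2 + cc.2 ^ q := ((hAdj d cc).mp (f.map_rel hadj23).symm).2
    by_cases h1 : a.1 = cc.1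
    · apply hac
      have h2 : a.2 = cc.2 := by
        apply hfrobinj
        have h3 : b.2 + a.2 ^ q = b.2 + cc.2 ^ q := by rw [← E1, ← E2, h1]
        exact add_left_cancel h3
      exact Prod.ext h1 h2
    · have hne : a.1 ^ q - cc.1 ^ q ≠ 0 := by
        intro h; exact h1 (hfrobinj _ _ (sub_eq_zero.mp h))
      have hb : b.1 * (a.1 ^ q - cc.1 ^ q) = a.2 ^ q - cc.2 ^ q := by linear_combination E1 - E2
      have hd : d.1 * (a.1 ^ q - cc.1 ^ q) = a.2 ^ q - cc.2 ^ q := by linear_combination E3 - E4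
      have hbd1 : b.1 = d.1 := mul_right_cancel₀ hne (hb.trans hd.symm)
      have hbd2 : b.2 = d.2 := by linear_combination E3 - E1 + (a.1)^q * hbd1
      exact hbd (Prod.ext hbd1 hbd2)
  -- generator of the multiplicative group
  obtain ⟨g, hg⟩ := IsCyclic.exists_ofOrder_eq_natCard (α := Fˣ)
  have hcardU : Nat.card Fˣ = q ^ 2 - 1 := by
    rw [Nat.card_eq_fintype_card, Fintype.card_units (α := F), hF]
  rw [hcardU] at hg
  set α : F := (g : F) with hαdef
  have hα0 : α ≠ 0 := Units.ne_zero g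
  have hq21 : 1 ≤ q ^ 2 := by nlinarith
  have harith : (q + 1) * (q - 1) = q ^ 2 - 1 := by zify [hq1, hq21]; ring
  have hαnotK : ¬ ((α ^ (q - 1)) ^ q = α ^ (q - 1)) := by
    intro hcon
    have hu : (g ^ (q - 1)) ^ q = g ^ (q - 1) := by
      apply Units.ext
      push_cast
      exact hcon
    rw [← pow_mul] at hu
    have hmod : (q - 1) ≡ (q - 1) * q [MOD orderOf g] := (pow_eq_pow_iff_modEq.mp hu).symm
    have hdvd2 : orderOf g ∣ (q - 1) * q - (q - 1) :=
      (Nat.modEq_iff_dvd' (Nat.le_mul_of_pos_right _ (by omega))).mp hmod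
    rw [hg] at hdvd2
    have h1 : (q - 1) * q - (q - 1) = (q - 1) * (q - 1) := by
      have h2 : (q - 1) * q = (q - 1) * (q - 1) + (q - 1) := by
        rw [← Nat.mul_succ]; congr 1; omega
      omega
    rw [h1] at hdvd2
    have h2 : 0 < (q - 1) * (q - 1) := Nat.mul_pos (by omega) (by omega)
    have h3 := Nat.le_of_dvd h2 hdvd2
    have h4 : (q - 1) * (q - 1) < q ^ 2 - 1 := by
      have h5 : q ^ 2 = q * q := sq q
      nlinarith [Nat.sub_add_cancel hq1]
    omega
  -- the subgroup of (q-1)-st roots of unity gives the lower bound on K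
  set h' : Fˣ := g ^ (q + 1) with hh'
  have hdvd : (q + 1) ∣ q ^ 2 - 1 := ⟨q - 1, harith.symm⟩
  have hordh : orderOf h' = q - 1 := by
    rw [hh', orderOf_pow g, hg, Nat.gcd_eq_right hdvd, ← harith,
      Nat.mul_div_cancel_left _ (by omega : 0 < q + 1)]
  have hmemK : ∀ i : ℕ, ((h' : F) ^ i) ^ q = (h' : F) ^ i := by
    intro i
    have key : (h' ^ i) ^ (q - 1) = 1 := by
      rw [pow_right_comm, ← hordh, pow_orderOf_eq_one, one_pow]
    have h1 : (h' ^ i) ^ q = h' ^ i := by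
      calc (h' ^ i) ^ q = (h' ^ i) ^ (q - 1) * (h' ^ i) := by
            rw [← pow_succ]; congr 1; omega
        _ = h' ^ i := by rw [key, one_mul]
    have := congrArg (Units.val) h1
    push_cast at this
    exact this
  have hKcard : q ≤ Fintype.card {x : F // x ^ q = x} := by
    set Kfin : Finset F := Finset.univ.filter (fun x => x ^ q = x) with hKfin
    have hcardeq : Fintype.card {x : F // x ^ q = x} = Kfin.card := Fintype.card_subtype _
    set T : Finset F := insert (0 : F) ((Finset.range (q - 1)).image (fun i => (h' : F) ^ i))
      with hT
    have hTsub : T ⊆ Kfin := by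
      intro x hx
      simp only [hT, Finset.mem_insert, Finset.mem_image, Finset.mem_range] at hx
      rw [hKfin, Finset.mem_filter]
      refine ⟨Finset.mem_univ _, ?_⟩
      rcases hx with rfl | ⟨i, _, rfl⟩
      · exact zero_pow hq0
      · exact hmemK i
    have hTcard : T.card = q := by
      rw [hT, Finset.card_insert_of_notMem, Finset.card_image_of_injOn, Finset.card_range]
      · omega
      · intro i hi j hj hij
        simp only [Finset.coe_range, Set.mem_Iio] at hi hj
        have hu : (h' ^ i : Fˣ) = h' ^ j := Units.ext (by push_cast; exact hij)
        exact pow_injOn_Iio_orderOf (by rw [hordh]; exact Set.mem_Iio.mpr hi)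
          (by rw [hordh]; exact Set.mem_Iio.mpr hj) hu
      · simp only [Finset.mem_image, Finset.mem_range, not_exists]
        intro i hcon
        exact pow_ne_zero i (Units.ne_zero h') hcon.2
    calc q = T.card := hTcard.symm
      _ ≤ Kfin.card := Finset.card_le_card hTsub
      _ = _ := hcardeq.symm
  -- the decomposition map
  set m : {x : F // x ^ q = x} × {x : F // x ^ q = x} → F :=
    fun st => α * (st.1 : F) + α ^ q * (st.2 : F) with hm
  have hminj : Function.Injective m := by
    rintro ⟨s, t⟩ ⟨s', t'⟩ hmeq
    simp only [hm] at hmeq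
    by_cases ht : (t : F) = (t' : F)
    · have h1 : α * (s : F) = α * (s' : F) := by linear_combination hmeq - α ^ q * ht
      have hs : (s : F) = (s' : F) := mul_left_cancel₀ hα0 h1
      exact Prod.ext (Subtype.ext hs) (Subtype.ext ht)
    · exfalso
      have hne : (t' : F) - (t : F) ≠ 0 := sub_ne_zero.mpr (Ne.symm ht)
      have hαq : α ^ q = α * α ^ (q - 1) := by rw [← pow_succ']; congr 1; omega
      have h2 : α * ((s : F) - (s' : F)) = α * (α ^ (q - 1) * ((t' : F) - (t : F))) := by
        linear_combination hmeq + ((t' : F) - (t : F)) * hαq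
      have h3 : (s : F) - (s' : F) = α ^ (q - 1) * ((t' : F) - (t : F)) :=
        mul_left_cancel₀ hα0 h2
      have h1 : α ^ (q - 1) = ((s : F) - (s' : F)) * ((t' : F) - (t : F))⁻¹ := by
        rw [h3]; field_simp
      apply hαnotK
      have h4 : ((s : F) - (s' : F)) ^ q = (s : F) - (s' : F) := by
        rw [hsub, s.2, s'.2]
      have h5 : ((t' : F) - (t : F)) ^ q = (t' : F) - (t : F) := by
        rw [hsub, t'.2, t.2]
      calc (α ^ (q - 1)) ^ q
          = (((s : F) - (s' : F)) * ((t' : F) - (t : F))⁻¹) ^ q := by rw [h1]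
        _ = ((s : F) - (s' : F)) ^ q * (((t' : F) - (t : F)) ^ q)⁻¹ := by
            rw [mul_pow, inv_pow]
        _ = ((s : F) - (s' : F)) * ((t' : F) - (t : F))⁻¹ := by rw [h4, h5]
        _ = α ^ (q - 1) := h1.symm
  have hKq : Fintype.card {x : F // x ^ q = x} = q := by
    have hle : Fintype.card {x : F // x ^ q = x} * Fintype.card {x : F // x ^ q = x} ≤ q ^ 2 := by
      have h := Fintype.card_le_of_injective m hminj
      rwa [Fintype.card_prod, hF] at h
    nlinarith [hKcard]
  have hmbij : Function.Bijective m :=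
    (Fintype.bijective_iff_injective_and_card m).mpr ⟨hminj, by
      rw [Fintype.card_prod, hKq, hF]; ring⟩
  set ψ := Equiv.ofBijective m hmbij with hψdef
  have hψ : ∀ st, ψ st = α * (st.1 : F) + α ^ q * (st.2 : F) := fun _ => rfl
  have hcard3 : Fintype.card (F × {x : F // x ^ q = x}) = q ^ 3 := by
    rw [Fintype.card_prod, hF, hKq]; ring
  set e₃ : F × {x : F // x ^ q = x} ≃ Fin (q ^ 3) := Fintype.equivFinOfCardEq hcard3 with he₃
  set c : F × F → Fin (q ^ 3) := fun v => e₃ (v.1, (ψ.symm v.2).2) with hc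
  -- Part 2 : complete partition with parts of size exactly q
  have part2 : IsCompletePartition G c ∧
      ∀ i : Fin (q ^ 3), {v : F × F | c v = i}.ncard = q := by
    constructor
    · intro i j hij
      set x : F := (e₃.symm i).1 with hx
      set τ : {x : F // x ^ q = x} := (e₃.symm i).2 with hτ
      set x' : F := (e₃.symm j).1 with hx'
      set τ' : {x : F // x ^ q = x} := (e₃.symm j).2 with hτ'
      set ab := ψ.symm (x * x' ^ q) with habdef
      have habeq : α * (ab.1 : F) + α ^ q * (ab.2 : F) = x * x' ^ q := by
        rw [← hψ]; exact ψ.apply_symm_apply _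
      have hsprop : ((ab.1 : F) - (τ' : F)) ^ q = (ab.1 : F) - (τ' : F) := by
        rw [hsub, ab.1.2, τ'.2]
      have hs'prop : ((ab.2 : F) - (τ : F)) ^ q = (ab.2 : F) - (τ : F) := by
        rw [hsub, ab.2.2, τ.2]
      set y : F := ψ (⟨(ab.1 : F) - (τ' : F), hsprop⟩, τ) with hy
      set y' : F := ψ (⟨(ab.2 : F) - (τ : F), hs'prop⟩, τ') with hy'
      have hcy : (ψ.symm y).2 = τ := by rw [hy, ψ.symm_apply_apply]
      have hcy' : (ψ.symm y').2 = τ' := by rw [hy', ψ.symm_apply_apply]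
      have hcu : c (x, y) = i := by
        rw [hc]
        show e₃ (x, (ψ.symm y).2) = i
        rw [hcy, hx, hτ, Prod.mk.eta, e₃.apply_symm_apply]
      have hcv : c (x', y') = j := by
        rw [hc]
        show e₃ (x', (ψ.symm y').2) = j
        rw [hcy', hx', hτ', Prod.mk.eta, e₃.apply_symm_apply]
      have hyval : y = α * ((ab.1 : F) - (τ' : F)) + α ^ q * (τ : F) := hψ _
      have hy'val : y' = α * ((ab.2 : F) - (τ : F)) + α ^ q * (τ' : F) := hψ _
      have hy'q : y' ^ q = α ^ q * ((ab.2 : F) - (τ : F)) + α * (τ' : F) := by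
        rw [hy'val, hadd, mul_pow, mul_pow, hqq, hs'prop, τ'.2]
      have hyq : y + y' ^ q = x * x' ^ q := by
        rw [hyval, hy'q]; linear_combination habeq
      refine ⟨(x, y), (x', y'), hcu, hcv, ?_⟩
      have hne : (x, y) ≠ (x', y') := by
        intro heq
        apply hij
        rw [← hcu, ← hcv, heq]
      rw [hAdj]
      exact ⟨hne, hyq.symm⟩
    · intro i
      set x₀ : F := (e₃.symm i).1 with hx₀
      set τ₀ : {x : F // x ^ q = x} := (e₃.symm i).2 with hτ₀
      have hinj : Function.Injective (fun s : {x : F // x ^ q = x} => (x₀, ψ (s, τ₀))) := by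
        intro s s' hss
        have h1 : ψ (s, τ₀) = ψ (s', τ₀) := congrArg Prod.snd hss
        have h2 := ψ.injective h1
        exact congrArg Prod.fst h2
      have hset : {v : F × F | c v = i} =
          (fun s : {x : F // x ^ q = x} => (x₀, ψ (s, τ₀))) '' Set.univ := by
        ext v
        simp only [Set.mem_setOf_eq, Set.image_univ, Set.mem_range]
        constructor
        · intro hv
          have h1 : (v.1, (ψ.symm v.2).2) = e₃.symm i := by
            rw [← hv, hc]
            exact (e₃.symm_apply_apply _).symm
          have hxv : v.1 = x₀ := by rw [hx₀, ← h1]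
          have hτv : (ψ.symm v.2).2 = τ₀ := by rw [hτ₀, ← h1]
          refine ⟨(ψ.symm v.2).1, ?_⟩
          have h2 : ((ψ.symm v.2).1, τ₀) = ψ.symm v.2 := by
            rw [← hτv]
          rw [h2, ψ.apply_symm_apply, ← hxv]
        · rintro ⟨s, rfl⟩
          rw [hc]
          show e₃ ((x₀, ψ (s, τ₀)).1, (ψ.symm (ψ (s, τ₀))).2) = i
          rw [ψ.symm_apply_apply]
          show e₃ (x₀, τ₀) = i
          rw [hx₀, hτ₀, Prod.mk.eta, e₃.apply_symm_apply]
      rw [hset, Set.ncard_image_of_injective _ hinj, Set.ncard_univ, Nat.card_eq_fintype_card,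
        hKq]
  -- Part 3 : fC4 bound
  have part3 : fC4 (q ^ 3) ≤ q := by
    have hcard4 : Fintype.card (F × F) = q ^ 4 := by
      rw [Fintype.card_prod, hF]; ring
    set e : (F × F) ≃ Fin (q ^ 4) := Fintype.equivFinOfCardEq hcard4 with he
    set G' : SimpleGraph (Fin (q ^ 4)) := SimpleGraph.comap (e.symm : Fin (q ^ 4) → F × F) G
      with hG'
    have hG'adj : ∀ a b : Fin (q ^ 4), G'.Adj a b ↔ G.Adj (e.symm a) (e.symm b) :=
      fun _ _ => Iff.rfl
    apply Nat.sInf_le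
    refine ⟨q ^ 4, G', ?_, fun a => c (e.symm a), ?_, ?_⟩
    · rintro ⟨f, hfinj⟩
      apply part1
      refine ⟨⟨fun z => e.symm (f z), fun {a b} hab => ?_⟩, fun a b hab => ?_⟩
      · exact (hG'adj _ _).mp (f.map_rel hab)
      · exact hfinj (e.symm.injective hab)
    · intro i j hij
      obtain ⟨u, v, hu, hv, huv⟩ := part2.1 i j hij
      refine ⟨e u, e v, ?_, ?_, ?_⟩
      · show c (e.symm (e u)) = i
        rw [e.symm_apply_apply]; exact hu
      · show c (e.symm (e v)) = j
        rw [e.symm_apply_apply]; exact hv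
      · rw [hG'adj, e.symm_apply_apply, e.symm_apply_apply]; exact huv
    · intro i
      have hset : {a : Fin (q ^ 4) | c (e.symm a) = i} = e '' {v : F × F | c v = i} := by
        ext a
        simp only [Set.mem_setOf_eq, Set.mem_image]
        constructor
        · intro ha
          exact ⟨e.symm a, ha, e.apply_symm_apply a⟩
        · rintro ⟨v, hv, rfl⟩
          rw [e.symm_apply_apply]; exact hv
      rw [hset, Set.ncard_image_of_injective _ e.injective, part2.2 i]
  exact ⟨part1, ⟨c, part2.1, part2.2⟩, part3⟩
end

section
/- Let e ≥ 1 be an integer and q = 2^{2e+1}. For p₁, p₂ ∈ F_q set P_{p₁,p₂} = {(p₁,p₂,a) : a ∈ F_q}. Then the q² sets P_{p₁,p₂} partition the vertex set F_q³ of the polarity graph GQ_q^π into parts of size q, each part is an independent set of GQ_q^π, and for any two distinct parts there is exactly one edge of GQ_q^π with one endpoint in each part; explicitly, the unique edge between P_{p₁,p₂} and P_{r₁,r₂} joins (p₁, p₂, p₁²r₁^{2^{e+1}} + r₂^{2^{e+1}}) and (r₁, r₂, p₁^{2^{e+1}}r₁² + p₂^{2^{e+1}}). -/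
/-- The polarity graph `GQ_q^π` of the biaffine part of the classical generalized
quadrangle, for `q = 2^(2e+1)`: vertices are triples `(p₁,p₂,p₃)` over `F_q`, with
`(p₁,p₂,p₃)` adjacent to `(r₁,r₂,r₃)` iff they are distinct and
`p₂ + r₃^(2^e) = p₁ r₁^(2^(e+1))` and `p₃ + r₂^(2^(e+1)) = p₁² r₁^(2^(e+1))`. -/
def GQPolarityGraph (e : ℕ) (F : Type*) [Field F] : SimpleGraph (F × F × F) :=
  SimpleGraph.fromRel (fun p r =>
    p.2.1 + r.2.2 ^ (2 ^ e) = p.1 * r.1 ^ (2 ^ (e + 1)) ∧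
    p.2.2 + r.2.1 ^ (2 ^ (e + 1)) = p.1 ^ 2 * r.1 ^ (2 ^ (e + 1)))

/-- The part `P_{p₁,p₂} = {(p₁, p₂, a) : a ∈ F_q}`. -/
def GQPart {F : Type*} (p₁ p₂ : F) : Set (F × F × F) :=
  {v : F × F × F | v.1 = p₁ ∧ v.2.1 = p₂}

theorem GQPolarityGraph_partition
    (e : ℕ) (he : 1 ≤ e) (q : ℕ) (hq : q = 2 ^ (2 * e + 1))
    (F : Type*) [Field F] [Fintype F] (hF : Fintype.card F = q) :
    -- the `q²` sets `P_{p₁,p₂}` partition the vertex set `F_q³`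
    (∀ v : F × F × F, ∃! pp : F × F, v ∈ GQPart pp.1 pp.2) ∧
    -- each part has exactly `q` elements
    (∀ p₁ p₂ : F, (GQPart p₁ p₂).ncard = q) ∧
    -- each part is an independent set
    (∀ p₁ p₂ : F, ∀ u ∈ GQPart p₁ p₂, ∀ w ∈ GQPart p₁ p₂,
        ¬ (GQPolarityGraph e F).Adj u w) ∧
    -- between any two distinct parts there is exactly one edge, joining the
    -- explicitly given pair of vertices
    (∀ p₁ p₂ r₁ r₂ : F, (p₁, p₂) ≠ (r₁, r₂) →
      (GQPolarityGraph e F).Adj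
        (p₁, p₂, p₁ ^ 2 * r₁ ^ (2 ^ (e + 1)) + r₂ ^ (2 ^ (e + 1)))
        (r₁, r₂, p₁ ^ (2 ^ (e + 1)) * r₁ ^ 2 + p₂ ^ (2 ^ (e + 1))) ∧
      ∀ u ∈ GQPart p₁ p₂, ∀ w ∈ GQPart r₁ r₂, (GQPolarityGraph e F).Adj u w →
        u = (p₁, p₂, p₁ ^ 2 * r₁ ^ (2 ^ (e + 1)) + r₂ ^ (2 ^ (e + 1))) ∧
        w = (r₁, r₂, p₁ ^ (2 ^ (e + 1)) * r₁ ^ 2 + p₂ ^ (2 ^ (e + 1)))) := by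
  subst hq
  have hch2 : (2 : F) = 0 := by
    have h := FiniteField.cast_card_eq_zero F
    rw [hF] at h
    push_cast at h
    exact pow_eq_zero_iff (by positivity) |>.mp h
  haveI hcp : CharP F 2 := by
    haveI := ringChar.charP F
    have hp : (ringChar F).Prime := CharP.char_is_prime F (ringChar F)
    have hdvd : ringChar F ∣ 2 := (CharP.cast_eq_zero_iff F (ringChar F) 2).mp (by exact_mod_cast hch2)
    have h2 : ringChar F = 2 := (Nat.prime_dvd_prime_iff_eq hp Nat.prime_two).mp hdvd
    rw [← h2]; infer_instance
  have hqpow : ∀ x : F, x ^ (2 ^ (2 * e + 1)) = x := fun x => by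
    rw [← hF]; exact FiniteField.pow_card x
  have hmul : 2 ^ (e + 1) * 2 ^ e = 2 ^ (2 * e + 1) := by
    rw [← pow_add]; ring_nf
  have hmul' : 2 ^ e * 2 ^ (e + 1) = 2 ^ (2 * e + 1) := by
    rw [← pow_add]; ring_nf
  have hse : ∀ x : F, (x ^ 2 ^ (e + 1)) ^ 2 ^ e = x := fun x => by
    rw [← pow_mul, hmul, hqpow]
  have hes : ∀ x : F, (x ^ 2 ^ e) ^ 2 ^ (e + 1) = x := fun x => by
    rw [← pow_mul, hmul', hqpow]
  have hinj : ∀ x y : F, x ^ 2 ^ e = y ^ 2 ^ e → x = y := fun x y h => by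
    rw [← hes x, h, hes]
  have hfrob : ∀ x y : F, (x + y) ^ 2 ^ e = x ^ 2 ^ e + y ^ 2 ^ e := fun x y =>
    add_pow_char_pow x y 2 e
  have hr : ∀ x : F, (x ^ 2) ^ 2 ^ e = x ^ 2 ^ (e + 1) := fun x => by
    rw [← pow_mul, pow_succ' 2 e]
  have hA : ∀ p₁ p₂ r₁ : F,
      (p₁ ^ 2 ^ (e + 1) * r₁ ^ 2 + p₂ ^ 2 ^ (e + 1)) ^ 2 ^ e
        = p₁ * r₁ ^ 2 ^ (e + 1) + p₂ := by
    intro p₁ p₂ r₁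
    rw [hfrob, mul_pow, hr, hse, hse]
  have hB : ∀ p₁ r₁ r₂ : F,
      (p₁ ^ 2 * r₁ ^ 2 ^ (e + 1) + r₂ ^ 2 ^ (e + 1)) ^ 2 ^ e
        = p₁ ^ 2 ^ (e + 1) * r₁ + r₂ := by
    intro p₁ r₁ r₂
    rw [hfrob, mul_pow, hr, hse, hse]
  refine ⟨?_, ?_, ?_, ?_⟩
  · intro v
    refine ⟨(v.1, v.2.1), ⟨rfl, rfl⟩, ?_⟩
    rintro ⟨a, b⟩ ⟨h1, h2⟩
    simp [h1, h2]
  · intro p₁ p₂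
    have hset : GQPart p₁ p₂ = Set.range (fun a : F => (p₁, p₂, a)) := by
      ext ⟨x, y, z⟩
      constructor
      · rintro ⟨rfl, rfl⟩
        exact ⟨z, rfl⟩
      · rintro ⟨a, ha⟩
        simp only [Prod.mk.injEq] at ha
        exact ⟨ha.1.symm, ha.2.1.symm⟩
    have hinj' : Function.Injective (fun a : F => (p₁, p₂, a)) := by
      intro a b h
      simpa using h
    rw [hset, ← Set.image_univ, Set.ncard_image_of_injective _ hinj',
      Set.ncard_univ, Nat.card_eq_fintype_card, hF]
  · rintro p₁ p₂ ⟨u1, u2, u3⟩ ⟨hu1, hu2⟩ ⟨w1, w2, w3⟩ ⟨hw1, hw2⟩ hadj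
    rw [GQPolarityGraph, SimpleGraph.fromRel_adj] at hadj
    simp only at hu1 hu2 hw1 hw2 hadj
    rw [hu1, hu2, hw1, hw2] at hadj
    obtain ⟨hne, hrel⟩ := hadj
    apply hne
    simp only [Prod.mk.injEq, true_and]
    rcases hrel with ⟨h1, h2⟩ | ⟨h1, h2⟩
    · apply hinj
      have hu : u3 = p₁ ^ 2 * p₁ ^ 2 ^ (e + 1) + p₂ ^ 2 ^ (e + 1) := by
        linear_combination h2 - p₂ ^ 2 ^ (e + 1) * hch2
      have hw : w3 ^ 2 ^ e = p₁ * p₁ ^ 2 ^ (e + 1) + p₂ := by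
        linear_combination h1 - p₂ * hch2
      rw [hu, hw, hB]
      ring
    · apply hinj
      have hw : w3 = p₁ ^ 2 * p₁ ^ 2 ^ (e + 1) + p₂ ^ 2 ^ (e + 1) := by
        linear_combination h2 - p₂ ^ 2 ^ (e + 1) * hch2
      have hu : u3 ^ 2 ^ e = p₁ * p₁ ^ 2 ^ (e + 1) + p₂ := by
        linear_combination h1 - p₂ * hch2
      rw [hu, hw, hB]
      ring
  · intro p₁ p₂ r₁ r₂ hne
    constructor
    · rw [GQPolarityGraph, SimpleGraph.fromRel_adj]
      refine ⟨?_, Or.inl ⟨?_, ?_⟩⟩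
      · intro h
        simp only [Prod.mk.injEq] at h
        exact hne (by simp [h.1, h.2.1])
      · simp only
        rw [hA]
        linear_combination p₂ * hch2
      · simp only
        linear_combination r₂ ^ 2 ^ (e + 1) * hch2
    · rintro ⟨u1, u2, u3⟩ ⟨hu1, hu2⟩ ⟨w1, w2, w3⟩ ⟨hw1, hw2⟩ hadj
      rw [GQPolarityGraph, SimpleGraph.fromRel_adj] at hadj
      simp only at hu1 hu2 hw1 hw2 hadj
      rw [hu1, hu2, hw1, hw2] at hadj
      obtain ⟨-, hrel⟩ := hadj
      rcases hrel with ⟨h1, h2⟩ | ⟨h1, h2⟩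
      · have hu : u3 = p₁ ^ 2 * r₁ ^ 2 ^ (e + 1) + r₂ ^ 2 ^ (e + 1) := by
          linear_combination h2 - r₂ ^ 2 ^ (e + 1) * hch2
        have hw : w3 = p₁ ^ 2 ^ (e + 1) * r₁ ^ 2 + p₂ ^ 2 ^ (e + 1) := by
          apply hinj
          rw [hA]
          linear_combination h1 - p₂ * hch2
        exact ⟨by rw [hu1, hu2, hu], by rw [hw1, hw2, hw]⟩
      · have hw : w3 = p₁ ^ 2 ^ (e + 1) * r₁ ^ 2 + p₂ ^ 2 ^ (e + 1) := by
          linear_combination h2 - p₂ ^ 2 ^ (e + 1) * hch2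
        have hu : u3 = p₁ ^ 2 * r₁ ^ 2 ^ (e + 1) + r₂ ^ 2 ^ (e + 1) := by
          apply hinj
          rw [hB]
          linear_combination h1 - r₂ * hch2
        exact ⟨by rw [hu1, hu2, hu], by rw [hw1, hw2, hw]⟩
end

section
/- Let e ≥ 1 be an integer and q = 2^{2e+1}. The number of edges of the polarity graph GQ_q^π equals (q⁴ − q²)/2, i.e., the binomial coefficient C(q², 2). -/
theorem card_edgeSet_GQPolarityGraph
    (e : ℕ) (he : 1 ≤ e) (q : ℕ) (hq : q = 2 ^ (2 * e + 1))
    (F : Type*) [Field F] [Fintype F] (hF : Fintype.card F = q) :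
    (GQPolarityGraph e F).edgeSet.ncard = (q ^ 4 - q ^ 2) / 2 ∧
    (GQPolarityGraph e F).edgeSet.ncard = Nat.choose (q ^ 2) 2 := by
  classical
  have hcard : Fintype.card F = 2 ^ (2 * e + 1) := by rw [hF, hq]
  -- characteristic 2
  have h2 : (2 : F) = 0 := by
    have h0 : ((Fintype.card F : ℕ) : F) = 0 := FiniteField.cast_card_eq_zero F
    rw [hcard] at h0
    push_cast at h0
    exact pow_eq_zero_iff (by omega) |>.mp h0
  haveI hchar : CharP F 2 := by
    have hd : ringChar F ∣ 2 := (ringChar.spec F 2).mp (by exact_mod_cast h2)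
    rcases (Nat.Prime.eq_one_or_self_of_dvd Nat.prime_two _ hd) with h1 | h1
    · exact absurd (ringChar.eq_iff.mp h1).cast_eq_zero (by simp)
    · exact h1 ▸ ringChar.charP F
  have hmul : 2 ^ e * 2 ^ (e + 1) = 2 ^ (2 * e + 1) := by
    rw [← pow_add]; congr 1; omega
  -- basic pow identities
  have hστ : ∀ x : F, (x ^ 2 ^ e) ^ 2 ^ (e + 1) = x := by
    intro x; rw [← pow_mul, hmul, ← hcard, FiniteField.pow_card]
  have hτσ : ∀ x : F, (x ^ 2 ^ (e + 1)) ^ 2 ^ e = x := by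
    intro x; rw [← pow_mul, mul_comm, hmul, ← hcard, FiniteField.pow_card]
  have hσσ : ∀ x : F, (x ^ 2 ^ (e + 1)) ^ 2 ^ (e + 1) = x ^ 2 := by
    intro x
    rw [← pow_mul]
    have : 2 ^ (e + 1) * 2 ^ (e + 1) = 2 ^ (2 * e + 1) * 2 := by
      rw [← pow_add, ← pow_succ]; congr 1; omega
    rw [this, pow_mul, ← hcard, FiniteField.pow_card]
  have hσadd : ∀ x y : F, (x + y) ^ 2 ^ (e + 1) = x ^ 2 ^ (e + 1) + y ^ 2 ^ (e + 1) :=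
    fun x y => add_pow_char_pow x y 2 (e + 1)
  have hτadd : ∀ x y : F, (x + y) ^ 2 ^ e = x ^ 2 ^ e + y ^ 2 ^ e :=
    fun x y => add_pow_char_pow x y 2 e
  have hτsq : ∀ x : F, (x ^ 2) ^ 2 ^ e = x ^ 2 ^ (e + 1) := by
    intro x; rw [← pow_mul, mul_comm, pow_succ]
  -- char-2 rearrangement
  have key : ∀ a b c : F, a + b = c ↔ b = c + a := by
    intro a b c
    constructor
    · intro h; linear_combination h - a * h2
    · intro h; linear_combination h + a * h2
  -- the "neighbour" map
  set f : F × F × F → F → F × F × F := fun p a =>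
    (a, (p.1 ^ 2 * a ^ 2 ^ (e + 1) + p.2.2) ^ 2 ^ e,
        (p.1 * a ^ 2 ^ (e + 1) + p.2.1) ^ 2 ^ (e + 1)) with hf
  set rel : F × F × F → F × F × F → Prop := fun p r =>
    p.2.1 + r.2.2 ^ (2 ^ e) = p.1 * r.1 ^ (2 ^ (e + 1)) ∧
    p.2.2 + r.2.1 ^ (2 ^ (e + 1)) = p.1 ^ 2 * r.1 ^ (2 ^ (e + 1)) with hrel_def
  have hrel : ∀ p r, rel p r ↔ r = f p r.1 := by
    rintro ⟨a, b, c⟩ ⟨x, y, z⟩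
    rw [hrel_def]
    simp only [hf, Prod.mk.injEq, true_and]
    constructor
    · rintro ⟨h1, h2'⟩
      have e1 := congrArg (· ^ 2 ^ (e + 1)) ((key _ _ _).mp h1)
      have e2 := congrArg (· ^ 2 ^ e) ((key _ _ _).mp h2')
      rw [hστ] at e1
      rw [hτσ] at e2
      exact ⟨e2, e1⟩
    · rintro ⟨hy, hz⟩
      constructor
      · rw [key, hz, hτσ]
      · rw [key, hy, hστ]
  -- symmetry of rel
  have hsym : ∀ p r, rel p r → rel r p := by
    intro p r h
    rw [hrel] at h
    obtain ⟨a, b, c⟩ := p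
    obtain ⟨x, y, z⟩ := r
    simp only [hf, Prod.mk.injEq, true_and] at h
    obtain ⟨hy, hz⟩ := h
    rw [hrel_def]
    constructor
    · show y + c ^ 2 ^ e = x * a ^ 2 ^ (e + 1)
      rw [hy, hτadd, mul_pow, hτsq, hτσ]
      linear_combination (c ^ 2 ^ e) * h2
    · show z + b ^ 2 ^ (e + 1) = x ^ 2 * a ^ 2 ^ (e + 1)
      rw [hz, hσadd, mul_pow, hσσ]
      linear_combination (b ^ 2 ^ (e + 1)) * h2
  -- adjacency
  haveI : DecidableRel (GQPolarityGraph e F).Adj := Classical.decRel _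
  have hAdj : ∀ p r, (GQPolarityGraph e F).Adj p r ↔ p ≠ r ∧ r = f p r.1 := by
    intro p r
    rw [GQPolarityGraph, SimpleGraph.fromRel_adj]
    constructor
    · rintro ⟨hne, hor⟩
      refine ⟨hne, (hrel p r).mp ?_⟩
      exact Or.elim hor id (fun h => hsym r p h)
    · rintro ⟨hne, hr⟩
      exact ⟨hne, Or.inl ((hrel p r).mpr hr)⟩
  have hfinj : ∀ p, Function.Injective (f p) := by
    intro p a b hab
    simpa [hf] using congrArg Prod.fst hab
  -- neighborhoods
  have hfst : ∀ p a, (f p a).1 = a := by intro p a; rw [hf]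
  have hnbr : ∀ p, (GQPolarityGraph e F).neighborFinset p =
      (Finset.univ.image (f p)).erase p := by
    intro p
    ext r
    rw [SimpleGraph.mem_neighborFinset, hAdj, Finset.mem_erase, Finset.mem_image]
    constructor
    · rintro ⟨hne, hr⟩
      exact ⟨Ne.symm hne, r.1, Finset.mem_univ _, hr.symm⟩
    · rintro ⟨hne, a, -, ha⟩
      have ha1 : a = r.1 := by rw [← ha, hfst]
      exact ⟨Ne.symm hne, by rw [← ha1, ← ha]⟩
  have hdeg : ∀ p, (GQPolarityGraph e F).degree p =
      q - (if p = f p p.1 then 1 else 0) := by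
    intro p
    rw [SimpleGraph.degree, hnbr, Finset.card_erase_eq_ite,
      Finset.card_image_of_injective _ (hfinj p), Finset.card_univ, hF]
    have hmem : p ∈ Finset.univ.image (f p) ↔ p = f p p.1 := by
      rw [Finset.mem_image]
      constructor
      · rintro ⟨a, -, ha⟩
        have ha1 : a = p.1 := by rw [← ha, hfst]
        rw [← ha1]; exact ha.symm
      · intro h; exact ⟨p.1, Finset.mem_univ _, h.symm⟩
    split_ifs with h1 h2 h2
    · rfl
    · exact absurd (hmem.mp h1) h2
    · exact absurd (hmem.mpr h2) h1
    · simp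
  -- count loops
  set g : F × F → F × F × F := fun x =>
    (x.1, x.2, (x.1 * x.1 ^ 2 ^ (e + 1) + x.2) ^ 2 ^ (e + 1)) with hg
  have hloops : (Finset.univ.filter (fun p : F × F × F => p = f p p.1)).card = q ^ 2 := by
    have himg : Finset.univ.filter (fun p : F × F × F => p = f p p.1)
        = Finset.univ.image g := by
      ext p
      rw [Finset.mem_filter, Finset.mem_image]
      constructor
      · rintro ⟨-, hp⟩
        obtain ⟨a, b, c⟩ := p
        simp only [hf, Prod.mk.injEq, true_and] at hp
        refine ⟨(a, b), Finset.mem_univ _, ?_⟩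
        simp only [hg, Prod.mk.injEq, true_and]
        exact hp.2.symm
      · rintro ⟨x, -, hx⟩
        refine ⟨Finset.mem_univ _, ?_⟩
        obtain ⟨a, b⟩ := x
        rw [← hx]
        simp only [hg, hf, Prod.mk.injEq, true_and]
        refine ⟨?_, trivial⟩
        rw [hσadd, mul_pow, hσσ]
        have hx2 : a ^ 2 * a ^ 2 ^ (e + 1) +
            (a ^ 2 ^ (e + 1) * a ^ 2 + b ^ 2 ^ (e + 1)) = b ^ 2 ^ (e + 1) := by
          linear_combination (a ^ 2 * a ^ 2 ^ (e + 1)) * h2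
        rw [hx2, hτσ]
    rw [himg, Finset.card_image_of_injective, Finset.card_univ, Fintype.card_prod, hF]
    · ring
    · intro x y hxy
      simp only [hg, Prod.mk.injEq] at hxy
      exact Prod.ext hxy.1 hxy.2.1
  have hq1 : 1 ≤ q := by rw [hq]; exact Nat.one_le_two_pow
  -- handshake
  have hsum : ∑ v : F × F × F, (GQPolarityGraph e F).degree v = q ^ 4 - q ^ 2 := by
    calc ∑ v : F × F × F, (GQPolarityGraph e F).degree v
        = ∑ v : F × F × F, (q - if v = f v v.1 then 1 else 0) :=
          Finset.sum_congr rfl fun v _ => hdeg v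
      _ = ∑ v : F × F × F, q - ∑ v : F × F × F, (if v = f v v.1 then 1 else 0) := by
          rw [Finset.sum_tsub_distrib]
          intro v _
          split_ifs
          · exact hq1
          · exact Nat.zero_le _
      _ = q ^ 4 - q ^ 2 := by
          rw [Finset.sum_const, Finset.card_univ, Fintype.card_prod, Fintype.card_prod,
            hF, smul_eq_mul, Finset.sum_boole]
          push_cast
          rw [hloops]
          congr 1
          ring
  have hedge : (GQPolarityGraph e F).edgeSet.ncard
      = (GQPolarityGraph e F).edgeFinset.card := by
    rw [← SimpleGraph.coe_edgeFinset, Set.ncard_coe_finset]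
  have h2card : 2 * (GQPolarityGraph e F).edgeFinset.card = q ^ 4 - q ^ 2 := by
    rw [← SimpleGraph.sum_degrees_eq_twice_card_edges, hsum]
  have hdiv : (q ^ 4 - q ^ 2) / 2 = (GQPolarityGraph e F).edgeFinset.card :=
    Nat.div_eq_of_eq_mul_left (by norm_num)
      (h2card.symm.trans (mul_comm 2 _))
  constructor
  · rw [hedge]; exact hdiv.symm
  · rw [hedge, Nat.choose_two_right]
    have hsub : q ^ 2 * (q ^ 2 - 1) = q ^ 4 - q ^ 2 := by
      have hm : q ^ 2 * q ^ 2 = q ^ 4 := by ring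
      rw [Nat.mul_sub, mul_one, hm]
    rw [hsub]
    exact hdiv.symm
end

section
/- Let e ≥ 1 be an integer and q = 3^{2e+1}. The achromatic number of the polarity graph GH_q^π equals q³, and its pseudo-achromatic number also equals q³. -/
/-- The polarity graph `GH_q^π` of the biaffine part of the classical generalized
hexagon, for `q = 3^(2e+1)`: vertices are quintuples `(p₁,p₂,p₃,p₄,p₅)` over `F_q`,
with `p` adjacent to `r` iff they are distinct and
`p₂ + r₄^(3^e) = p₁ r₁^(3^(e+1))`, `p₃ + r₅^(3^e) = p₁² r₁^(3^(e+1))`,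
`p₄ + r₂^(3^(e+1)) = p₁³ r₁^(3^(e+1))`, and `p₅ + r₃^(3^(e+1)) = p₁³ r₁^(2·3^(e+1))`. -/
def GHPolarityGraph (e : ℕ) (F : Type*) [Field F] :
    SimpleGraph (F × F × F × F × F) :=
  SimpleGraph.fromRel (fun p r =>
    p.2.1 + r.2.2.2.1 ^ (3 ^ e) = p.1 * r.1 ^ (3 ^ (e + 1)) ∧
    p.2.2.1 + r.2.2.2.2 ^ (3 ^ e) = p.1 ^ 2 * r.1 ^ (3 ^ (e + 1)) ∧
    p.2.2.2.1 + r.2.1 ^ (3 ^ (e + 1)) = p.1 ^ 3 * r.1 ^ (3 ^ (e + 1)) ∧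
    p.2.2.2.2 + r.2.2.1 ^ (3 ^ (e + 1)) = p.1 ^ 3 * r.1 ^ (2 * 3 ^ (e + 1)))

/-!
Over a field with `q = 3^(2e+1)` elements the maps `x ↦ x^(3^e)` and `x ↦ x^(3^(e+1))` are
additive and mutually inverse, which makes the defining incidence relation symmetric and lets
one solve it for the last two coordinates of either endpoint. Hence a neighbour of a vertex is
determined by its first coordinate, so every degree is at most `q`, and a complete partition
into `r` parts, needing `r(r-1)/2` edges among at most `q⁵·q/2`, has `r ≤ q³`. Conversely,
colouring each vertex by its first three coordinates gives `q³` classes that are independent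
and pairwise joined by an edge.
-/

theorem Nat.le_of_mul_sub_one_le_mul_self {r n : ℕ} (hn : 0 < n) (h : r * (r - 1) ≤ n * n) :
    r ≤ n := by
  by_contra! hr
  have : (n + 1) * n ≤ r * (r - 1) := Nat.mul_le_mul hr (by omega)
  nlinarith

section CompletePartition

variable {V : Type*} {G : SimpleGraph V} {n : ℕ}

theorem IsCompletePartition.mul_sub_one_le [Fintype V] [DecidableRel G.Adj] {r : ℕ}
    {c : V → Fin r} (hc : IsCompletePartition G c) :
    r * (r - 1) ≤ Fintype.card V * G.maxDegree := by
  classical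
  have hsub : (Finset.univ : Finset (Fin r)).offDiag ⊆
      Finset.univ.image fun d : G.Dart => (c d.fst, c d.snd) := by
    rintro ⟨i, j⟩ hij
    obtain ⟨u, v, rfl, rfl, huv⟩ := hc i j (Finset.mem_offDiag.1 hij).2.2
    exact Finset.mem_image.2 ⟨⟨(u, v), huv⟩, Finset.mem_univ _, rfl⟩
  calc r * (r - 1) = (Finset.univ : Finset (Fin r)).offDiag.card := by
        rw [Finset.offDiag_card, Finset.card_univ, Fintype.card_fin, Nat.mul_sub_one]
    _ ≤ Fintype.card G.Dart := (Finset.card_le_card hsub).trans Finset.card_image_le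
    _ = ∑ v, G.degree v := G.dart_card_eq_sum_degrees
    _ ≤ Fintype.card V * G.maxDegree := by
        simpa using Finset.sum_le_sum fun v (_ : v ∈ Finset.univ) => G.degree_le_maxDegree v

theorem pseudoAchromatic_eq_of_forall_le
    (hle : ∀ (r : ℕ) (c : V → Fin r), IsCompletePartition G c → r ≤ n)
    {c : V → Fin n} (hc : IsCompletePartition G c) : pseudoAchromatic G = n :=
  le_antisymm (csSup_le' fun _ ⟨c', hc'⟩ => hle _ c' hc')
    (le_csSup ⟨n, fun _ ⟨c', hc'⟩ => hle _ c' hc'⟩ ⟨c, hc⟩)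

theorem achromatic_eq_of_forall_le
    (hle : ∀ (r : ℕ) (c : V → Fin r), IsCompletePartition G c → r ≤ n)
    {c : V → Fin n} (hc : IsCompletePartition G c) (hind : ∀ u v, c u = c v → ¬ G.Adj u v) :
    achromatic G = n :=
  le_antisymm (csSup_le' fun _ ⟨c', hc', _⟩ => hle _ c' hc')
    (le_csSup ⟨n, fun _ ⟨c', hc', _⟩ => hle _ c' hc'⟩ ⟨c, hc, hind⟩)

end CompletePartition

section FrobeniusPowers

variable {M : Type*} [Monoid M] {e : ℕ}

theorem pow_three_pow_pow_three_pow_succ (hM : ∀ x : M, x ^ 3 ^ (2 * e + 1) = x) (x : M) :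
    (x ^ 3 ^ e) ^ 3 ^ (e + 1) = x := by
  rw [← pow_mul, ← pow_add, show e + (e + 1) = 2 * e + 1 by omega, hM]

theorem pow_three_pow_succ_pow_three_pow (hM : ∀ x : M, x ^ 3 ^ (2 * e + 1) = x) (x : M) :
    (x ^ 3 ^ (e + 1)) ^ 3 ^ e = x := by
  rw [← pow_mul, ← pow_add, show e + 1 + e = 2 * e + 1 by omega, hM]

theorem pow_three_pow_succ_pow_three_pow_succ (hM : ∀ x : M, x ^ 3 ^ (2 * e + 1) = x) (x : M) :
    (x ^ 3 ^ (e + 1)) ^ 3 ^ (e + 1) = x ^ 3 := by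
  rw [← pow_three_pow_succ_pow_three_pow hM (x ^ 3), ← pow_mul, ← pow_mul, ← pow_mul, pow_succ 3 e]
  ring_nf

end FrobeniusPowers

namespace GHPolarityGraph

/-- The point `p` lies on the line polar to `r`. -/
def IsIncident (e : ℕ) {F : Type*} [CommRing F] (p r : F × F × F × F × F) : Prop :=
  p.2.1 + r.2.2.2.1 ^ (3 ^ e) = p.1 * r.1 ^ (3 ^ (e + 1)) ∧
  p.2.2.1 + r.2.2.2.2 ^ (3 ^ e) = p.1 ^ 2 * r.1 ^ (3 ^ (e + 1)) ∧
  p.2.2.2.1 + r.2.1 ^ (3 ^ (e + 1)) = p.1 ^ 3 * r.1 ^ (3 ^ (e + 1)) ∧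
  p.2.2.2.2 + r.2.2.1 ^ (3 ^ (e + 1)) = p.1 ^ 3 * r.1 ^ (2 * 3 ^ (e + 1))

def firstThree {F : Type*} (p : F × F × F × F × F) : F × F × F := (p.1, p.2.1, p.2.2.1)

variable {e : ℕ} {F : Type*}

theorem adj_iff [Field F] {p r : F × F × F × F × F} :
    (GHPolarityGraph e F).Adj p r ↔ p ≠ r ∧ (IsIncident e p r ∨ IsIncident e r p) :=
  Iff.rfl

section CommRing

variable [CommRing F] {p p' r : F × F × F × F × F}

theorem IsIncident.eq_of_fst_eq (h : IsIncident e p r) (h' : IsIncident e p' r)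
    (h1 : p.1 = p'.1) : p = p' := by
  obtain ⟨p1, p2, p3, p4, p5⟩ := p
  obtain ⟨_, _, _, _, _⟩ := p'
  obtain ⟨a1, a2, a3, a4⟩ := h
  obtain ⟨b1, b2, b3, b4⟩ := h'
  dsimp only at *
  subst h1
  simp only [Prod.mk.injEq, true_and]
  exact ⟨add_right_cancel (a1.trans b1.symm), add_right_cancel (a2.trans b2.symm),
    add_right_cancel (a3.trans b3.symm), add_right_cancel (a4.trans b4.symm)⟩

theorem IsIncident.eq_of_firstThree_eq (h : IsIncident e p r) (h' : IsIncident e r p)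
    (hpr : firstThree p = firstThree r) : p = r := by
  obtain ⟨p1, p2, p3, p4, p5⟩ := p
  obtain ⟨_, _, _, _, _⟩ := r
  obtain ⟨-, -, a3, a4⟩ := h
  obtain ⟨-, -, b3, b4⟩ := h'
  simp only [firstThree, Prod.mk.injEq] at hpr a3 a4 b3 b4 ⊢
  obtain ⟨rfl, rfl, rfl⟩ := hpr
  exact ⟨rfl, rfl, rfl, add_right_cancel (a3.trans b3.symm), add_right_cancel (a4.trans b4.symm)⟩

variable (hF : ∀ x : F, x ^ 3 ^ (2 * e + 1) = x)
include hF

theorem exists_isIncident (a b : F × F × F) :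
    ∃ p r : F × F × F × F × F, firstThree p = a ∧ firstThree r = b ∧ IsIncident e p r := by
  obtain ⟨a1, a2, a3⟩ := a
  obtain ⟨b1, b2, b3⟩ := b
  refine ⟨(a1, a2, a3, a1 ^ 3 * b1 ^ 3 ^ (e + 1) - b2 ^ 3 ^ (e + 1),
      a1 ^ 3 * b1 ^ (2 * 3 ^ (e + 1)) - b3 ^ 3 ^ (e + 1)),
    (b1, b2, b3, (a1 * b1 ^ 3 ^ (e + 1) - a2) ^ 3 ^ (e + 1),
      (a1 ^ 2 * b1 ^ 3 ^ (e + 1) - a3) ^ 3 ^ (e + 1)), rfl, rfl, ?_⟩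
  simp only [IsIncident, pow_three_pow_succ_pow_three_pow hF]
  refine ⟨by ring, by ring, by ring, by ring⟩

variable [ExpChar F 3]

theorem IsIncident.symm (h : IsIncident e p r) : IsIncident e r p := by
  obtain ⟨p1, p2, p3, p4, p5⟩ := p
  obtain ⟨r1, r2, r3, r4, r5⟩ := r
  obtain ⟨h1, h2, h3, h4⟩ := h
  dsimp only at h1 h2 h3 h4
  have cube_pow : ∀ x : F, (x ^ 3) ^ 3 ^ e = x ^ 3 ^ (e + 1) := fun x => by
    rw [← pow_mul, ← pow_succ']
  -- write `r₄, r₅` as `3^(e+1)`-th powers of their `3^e`-th powers, which `h1, h2` determine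
  rw [← pow_three_pow_pow_three_pow_succ hF r4, ← pow_three_pow_pow_three_pow_succ hF r5,
    eq_sub_of_add_eq' h1, eq_sub_of_add_eq' h2, eq_sub_of_add_eq h3, eq_sub_of_add_eq h4]
  simp only [IsIncident, sub_pow_expChar_pow, mul_pow, pow_mul, cube_pow,
    pow_three_pow_succ_pow_three_pow hF, pow_three_pow_succ_pow_three_pow_succ hF]
  refine ⟨by ring, by ring, by ring, by ring⟩

end CommRing

section Field

variable [Field F] (hF : ∀ x : F, x ^ 3 ^ (2 * e + 1) = x)
include hF

theorem exists_adj_of_firstThree_ne {a b : F × F × F} (hab : a ≠ b) :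
    ∃ p r, firstThree p = a ∧ firstThree r = b ∧ (GHPolarityGraph e F).Adj p r := by
  obtain ⟨p, r, rfl, rfl, h⟩ := exists_isIncident hF a b
  exact ⟨p, r, rfl, rfl, fun hpr => hab (congrArg firstThree hpr), Or.inl h⟩

theorem isCompletePartition_firstThree {n : ℕ} (E : F × F × F ≃ Fin n) :
    IsCompletePartition (GHPolarityGraph e F) (E ∘ firstThree) := by
  intro i j hij
  obtain ⟨p, r, hp, hr, h⟩ := exists_adj_of_firstThree_ne hF (E.symm.injective.ne hij)
  exact ⟨p, r, by simp [hp], by simp [hr], h⟩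

variable [ExpChar F 3]

theorem adj_iff_isIncident {p r : F × F × F × F × F} :
    (GHPolarityGraph e F).Adj p r ↔ p ≠ r ∧ IsIncident e p r := by
  rw [adj_iff, or_iff_left_of_imp (IsIncident.symm hF)]

theorem not_adj_of_firstThree_eq {p r : F × F × F × F × F} (h : firstThree p = firstThree r) :
    ¬ (GHPolarityGraph e F).Adj p r := by
  rw [adj_iff_isIncident hF]
  rintro ⟨hne, hpr⟩
  exact hne (hpr.eq_of_firstThree_eq (hpr.symm hF) h)

theorem maxDegree_le_card [Fintype F] [DecidableRel (GHPolarityGraph e F).Adj] :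
    (GHPolarityGraph e F).maxDegree ≤ Fintype.card F := by
  refine SimpleGraph.maxDegree_le_of_forall_degree_le _ _ fun v => ?_
  -- a neighbour `u` of `v` is incident with `v`, hence determined by its first coordinate
  refine Finset.card_le_card_of_injOn Prod.fst (fun _ _ => Finset.mem_univ _) fun u hu w hw huw => ?_
  simp only [Finset.mem_coe, SimpleGraph.mem_neighborFinset, SimpleGraph.adj_comm _ v,
    adj_iff_isIncident hF] at hu hw
  exact hu.2.eq_of_fst_eq hw.2 huw

theorem le_card_pow_three_of_isCompletePartition [Fintype F] {r : ℕ} {c : F × F × F × F × F → Fin r}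
    (hc : IsCompletePartition (GHPolarityGraph e F) c) : r ≤ Fintype.card F ^ 3 := by
  classical
  refine Nat.le_of_mul_sub_one_le_mul_self (pow_pos Fintype.card_pos 3) ?_
  calc r * (r - 1) ≤ Fintype.card (F × F × F × F × F) * (GHPolarityGraph e F).maxDegree :=
        hc.mul_sub_one_le
    _ = Fintype.card F ^ 5 * (GHPolarityGraph e F).maxDegree := by
        simp only [Fintype.card_prod]
        ring
    _ ≤ Fintype.card F ^ 5 * Fintype.card F := by grw [maxDegree_le_card hF]
    _ = Fintype.card F ^ 3 * Fintype.card F ^ 3 := by ring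

end Field

end GHPolarityGraph

theorem achromatic_and_pseudoAchromatic_GHPolarityGraph_general
    (e : ℕ) (q : ℕ) (hq : q = 3 ^ (2 * e + 1))
    (F : Type*) [Field F] [Fintype F] (hF : Fintype.card F = q) :
    achromatic (GHPolarityGraph e F) = q ^ 3 ∧
    pseudoAchromatic (GHPolarityGraph e F) = q ^ 3 := by
  subst hq
  have : Fact (Nat.Prime 3) := ⟨Nat.prime_three⟩
  have : CharP F 3 := charP_of_card_eq_prime_pow hF
  have hpow : ∀ x : F, x ^ 3 ^ (2 * e + 1) = x := fun x => hF ▸ FiniteField.pow_card x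
  have hle : ∀ (r : ℕ) (c : F × F × F × F × F → Fin r),
      IsCompletePartition (GHPolarityGraph e F) c → r ≤ (3 ^ (2 * e + 1)) ^ 3 :=
    fun r c hc => hF ▸ GHPolarityGraph.le_card_pow_three_of_isCompletePartition hpow hc
  let E : F × F × F ≃ Fin ((3 ^ (2 * e + 1)) ^ 3) :=
    Fintype.equivFinOfCardEq (by simp only [Fintype.card_prod, hF]; ring)
  have hc := GHPolarityGraph.isCompletePartition_firstThree hpow (e := e) E
  exact ⟨achromatic_eq_of_forall_le hle hc fun u v huv =>
      GHPolarityGraph.not_adj_of_firstThree_eq hpow (E.injective huv),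
    pseudoAchromatic_eq_of_forall_le hle hc⟩

theorem achromatic_and_pseudoAchromatic_GHPolarityGraph
    (e : ℕ) (he : 1 ≤ e) (q : ℕ) (hq : q = 3 ^ (2 * e + 1))
    (F : Type*) [Field F] [Fintype F] (hF : Fintype.card F = q) :
    achromatic (GHPolarityGraph e F) = q ^ 3 ∧
    pseudoAchromatic (GHPolarityGraph e F) = q ^ 3 :=
  achromatic_and_pseudoAchromatic_GHPolarityGraph_general e q hq F hF
end

section
/- Let e ≥ 1 be an integer and q = 3^{2e+1}. For p₁, p₂, p₃ ∈ F_q set P_{p₁,p₂,p₃} = {(p₁,p₂,p₃,a,b) : a, b ∈ F_q}. Then the q³ sets P_{p₁,p₂,p₃} partition the vertex set F_q⁵ of the polarity graph GH_q^π into parts of size q², each part is an independent set of GH_q^π, and for any two distinct parts there is exactly one edge of GH_q^π with one endpoint in each part. -/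
/-- The part `P_{p₁,p₂,p₃} = {(p₁, p₂, p₃, a, b) : a, b ∈ F_q}`. -/
def GHPart {F : Type*} (p₁ p₂ p₃ : F) : Set (F × F × F × F × F) :=
  {v : F × F × F × F × F | v.1 = p₁ ∧ v.2.1 = p₂ ∧ v.2.2.1 = p₃}

theorem GHPolarityGraph_partition
    (e : ℕ) (he : 1 ≤ e) (q : ℕ) (hq : q = 3 ^ (2 * e + 1))
    (F : Type*) [Field F] [Fintype F] (hF : Fintype.card F = q) :
    -- the `q³` sets `P_{p₁,p₂,p₃}` partition the vertex set `F_q⁵`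
    (∀ v : F × F × F × F × F, ∃! pp : F × F × F, v ∈ GHPart pp.1 pp.2.1 pp.2.2) ∧
    -- each part has exactly `q²` elements
    (∀ p₁ p₂ p₃ : F, (GHPart p₁ p₂ p₃).ncard = q ^ 2) ∧
    -- each part is an independent set
    (∀ p₁ p₂ p₃ : F, ∀ u ∈ GHPart p₁ p₂ p₃, ∀ w ∈ GHPart p₁ p₂ p₃,
        ¬ (GHPolarityGraph e F).Adj u w) ∧
    -- between any two distinct parts there is exactly one edge
    (∀ p₁ p₂ p₃ r₁ r₂ r₃ : F, (p₁, p₂, p₃) ≠ (r₁, r₂, r₃) →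
        ∃! ed : (F × F × F × F × F) × (F × F × F × F × F),
          ed.1 ∈ GHPart p₁ p₂ p₃ ∧ ed.2 ∈ GHPart r₁ r₂ r₃ ∧
          (GHPolarityGraph e F).Adj ed.1 ed.2) := by
  subst hq
  -- characteristic 3
  obtain ⟨n, hp3, hc⟩ := FiniteField.card F (ringChar F)
  have hdvd : ringChar F ∣ 3 := by
    have h1 : ringChar F ∣ 3 ^ (2 * e + 1) := by
      rw [← hF, hc]
      exact dvd_pow_self _ (by positivity)
    exact hp3.dvd_of_dvd_pow h1
  have h3 : ringChar F = 3 :=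
    (Nat.prime_dvd_prime_iff_eq hp3 (by norm_num)).mp hdvd
  haveI : CharP F 3 := h3 ▸ ringChar.charP F
  haveI : Fact (Nat.Prime 3) := ⟨by norm_num⟩
  -- power lemmas
  have hq3 : ∀ a : F, a ^ (3 : ℕ) ^ (2 * e + 1) = a := by
    intro a; rw [← hF]; exact FiniteField.pow_card a
  have hAB : ∀ a : F, (a ^ (3 : ℕ) ^ (e + 1)) ^ (3 : ℕ) ^ e = a := by
    intro a
    rw [← pow_mul, ← pow_add]
    have h : e + 1 + e = 2 * e + 1 := by omega
    rw [h]; exact hq3 a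
  have hBA : ∀ a : F, (a ^ (3 : ℕ) ^ e) ^ (3 : ℕ) ^ (e + 1) = a := by
    intro a
    rw [← pow_mul, ← pow_add]
    have h : e + (e + 1) = 2 * e + 1 := by omega
    rw [h]; exact hq3 a
  have hCC : ∀ a : F, (a ^ (3 : ℕ) ^ (e + 1)) ^ (3 : ℕ) ^ (e + 1) = a ^ 3 := by
    intro a
    rw [← pow_mul, ← pow_add]
    have h : e + 1 + (e + 1) = 2 * e + 1 + 1 := by omega
    rw [h, pow_succ, pow_mul, hq3]
  -- frobenius expansion
  have key : ∀ x y z : F, (x * y ^ (3 : ℕ) ^ (e + 1) - z) ^ (3 : ℕ) ^ (e + 1)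
      = x ^ (3 : ℕ) ^ (e + 1) * y ^ 3 - z ^ (3 : ℕ) ^ (e + 1) := by
    intro x y z
    rw [sub_pow_char_pow, mul_pow, hCC]
  -- the "solve for y in y^(3^e) = c" lemma
  have solve : ∀ y c : F, y ^ (3 : ℕ) ^ e = c → y = c ^ (3 : ℕ) ^ (e + 1) := by
    intro y c h
    rw [← h, hBA]
  have h2K : ∀ a : F, a ^ (2 * 3 ^ (e + 1)) = (a ^ 2) ^ (3 : ℕ) ^ (e + 1) := by
    intro a; rw [pow_mul]
  refine ⟨?_, ?_, ?_, ?_⟩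
  · -- partition
    intro v
    refine ⟨(v.1, v.2.1, v.2.2.1), ⟨rfl, rfl, rfl⟩, ?_⟩
    rintro ⟨a, b, c⟩ ⟨h1, h2, h3⟩
    simp only at h1 h2 h3
    rw [h1, h2, h3]
  · -- size of the parts
    intro p₁ p₂ p₃
    have himg : GHPart p₁ p₂ p₃
        = (fun ab : F × F => (p₁, p₂, p₃, ab.1, ab.2)) '' Set.univ := by
      ext ⟨a, b, c, d, f⟩
      simp only [GHPart, Set.mem_setOf_eq, Set.image_univ, Set.mem_range, Prod.mk.injEq]
      constructor
      · rintro ⟨rfl, rfl, rfl⟩; exact ⟨(d, f), rfl, rfl, rfl, rfl, rfl⟩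
      · rintro ⟨⟨d', f'⟩, h1, h2, h3, h4, h5⟩; exact ⟨h1.symm, h2.symm, h3.symm⟩
    have hinj : Function.Injective (fun ab : F × F => (p₁, p₂, p₃, ab.1, ab.2)) := by
      rintro ⟨a, b⟩ ⟨c, d⟩ h
      simpa using h
    rw [himg, Set.ncard_image_of_injective _ hinj, Set.ncard_univ, Nat.card_prod,
      Nat.card_eq_fintype_card, hF]
    ring
  · -- independence
    intro p₁ p₂ p₃ u hu w hw hadj
    obtain ⟨u1, u2, u3, u4, u5⟩ := u
    obtain ⟨v1, v2, v3, v4, v5⟩ := w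
    obtain ⟨h1, h2, h3⟩ := hu
    obtain ⟨h4, h5, h6⟩ := hw
    dsimp only at h1 h2 h3 h4 h5 h6
    subst h1 h2 h3 h4 h5 h6
    rw [GHPolarityGraph, SimpleGraph.fromRel_adj] at hadj
    obtain ⟨hne, hrel⟩ := hadj
    apply hne
    simp only [Prod.mk.injEq]
    refine ⟨trivial, trivial, trivial, ?_⟩
    rcases hrel with ⟨e1, e2, e3, e4⟩ | ⟨e1, e2, e3, e4⟩ <;>
      dsimp only at e1 e2 e3 e4
    · constructor
      · have hv4 := solve _ _ (show v4 ^ (3 : ℕ) ^ e = v1 * v1 ^ (3 : ℕ) ^ (e + 1) - v2 by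
          linear_combination e1)
        rw [hv4, key]
        linear_combination e3
      · have hv5 := solve _ _ (show v5 ^ (3 : ℕ) ^ e = v1 ^ 2 * v1 ^ (3 : ℕ) ^ (e + 1) - v3 by
          linear_combination e2)
        rw [hv5, key]
        rw [h2K] at e4
        linear_combination e4
    · constructor
      · have hu4 := solve _ _ (show u4 ^ (3 : ℕ) ^ e = v1 * v1 ^ (3 : ℕ) ^ (e + 1) - v2 by
          linear_combination e1)
        rw [hu4, key]
        linear_combination -e3
      · have hu5 := solve _ _ (show u5 ^ (3 : ℕ) ^ e = v1 ^ 2 * v1 ^ (3 : ℕ) ^ (e + 1) - v3 by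
          linear_combination e2)
        rw [hu5, key]
        rw [h2K] at e4
        linear_combination -e4
  · -- unique edge between distinct parts
    intro p₁ p₂ p₃ r₁ r₂ r₃ hne
    refine ⟨((p₁, p₂, p₃,
        p₁ ^ 3 * r₁ ^ (3 : ℕ) ^ (e + 1) - r₂ ^ (3 : ℕ) ^ (e + 1),
        p₁ ^ 3 * r₁ ^ (2 * 3 ^ (e + 1)) - r₃ ^ (3 : ℕ) ^ (e + 1)),
      (r₁, r₂, r₃,
        (p₁ * r₁ ^ (3 : ℕ) ^ (e + 1) - p₂) ^ (3 : ℕ) ^ (e + 1),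
        (p₁ ^ 2 * r₁ ^ (3 : ℕ) ^ (e + 1) - p₃) ^ (3 : ℕ) ^ (e + 1))),
      ⟨⟨rfl, rfl, rfl⟩, ⟨rfl, rfl, rfl⟩, ?_⟩, ?_⟩
    · rw [GHPolarityGraph, SimpleGraph.fromRel_adj]
      constructor
      · intro h
        simp only [Prod.mk.injEq] at h
        exact hne (by rw [h.1, h.2.1, h.2.2.1])
      · left
        refine ⟨?_, ?_, ?_, ?_⟩ <;> dsimp only
        · rw [hAB]; ring
        · rw [hAB]; ring
        · ring
        · ring
    · rintro ⟨⟨u1, u2, u3, u4, u5⟩, ⟨v1, v2, v3, v4, v5⟩⟩ ⟨⟨h1, h2, h3⟩, ⟨h4, h5, h6⟩, hadj⟩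
      dsimp only at h1 h2 h3 h4 h5 h6
      subst h1 h2 h3 h4 h5 h6
      rw [GHPolarityGraph, SimpleGraph.fromRel_adj] at hadj
      obtain ⟨-, hrel⟩ := hadj
      simp only [Prod.mk.injEq]
      refine ⟨⟨trivial, trivial, trivial, ?_, ?_⟩, trivial, trivial, trivial, ?_, ?_⟩ <;>
        rcases hrel with ⟨e1, e2, e3, e4⟩ | ⟨e1, e2, e3, e4⟩ <;>
          dsimp only at e1 e2 e3 e4
      · linear_combination e3
      · have := solve _ _ (show u4 ^ (3 : ℕ) ^ e = v1 * u1 ^ (3 : ℕ) ^ (e + 1) - v2 by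
          linear_combination e1)
        rw [this, key]
        ring
      · linear_combination e4
      · have := solve _ _ (show u5 ^ (3 : ℕ) ^ e = v1 ^ 2 * u1 ^ (3 : ℕ) ^ (e + 1) - v3 by
          linear_combination e2)
        rw [this, key, h2K]
        ring
      · exact solve _ _ (by linear_combination e1)
      · rw [key]
        linear_combination e3
      · exact solve _ _ (by linear_combination e2)
      · rw [key]
        rw [h2K] at e4
        linear_combination e4
end

section
/- Let e ≥ 1 be an integer and q = 3^{2e+1}. The number of edges of the polarity graph GH_q^π equals (q⁶ − q³)/2, i.e., the binomial coefficient C(q³, 2). -/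
/-!
For `q = 3 ^ (2 * e + 1)` the maps `x ↦ x ^ 3 ^ e` and `x ↦ x ^ 3 ^ (e + 1)` are mutually
inverse automorphisms of `F_q`, and the square of the second one is cubing. Applying them to the
four defining equations of adjacency exchanges the roles of the two vertices, so the defining
relation is symmetric. For fixed `r` and `p₁` the four equations determine `p₂, …, p₅`, so the
relation has `q · q⁵ = q⁶` ordered pairs, and its `q³` loops are parametrised by `(p₁, p₄, p₅)`.
Hence `2 |E| + q³ = q⁶`.
-/

open Finset

theorem SimpleGraph.two_mul_ncard_edgeSet_fromRel_add {V : Type*} [Finite V]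
    (r : V → V → Prop) [Std.Symm r] :
    2 * (fromRel r).edgeSet.ncard + Nat.card {v // r v v} =
      Nat.card {x : V × V // r x.1 x.2} := by
  classical
  have := Fintype.ofFinite V
  have hadj : ∀ x : V × V, (fromRel r).Adj x.1 x.2 ↔ r x.1 x.2 ∧ x.1 ≠ x.2 := fun x => by
    rw [fromRel_adj, or_iff_left_of_imp (Std.Symm.symm _ _)]; exact and_comm
  have hdiag : #{x : V × V | r x.1 x.2 ∧ x.1 = x.2} = #{v | r v v} := by
    refine card_nbij' Prod.fst (fun v => (v, v)) ?_ ?_ ?_ ?_ <;>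
      simp +contextual [Set.MapsTo, Set.LeftInvOn, Set.RightInvOn, Prod.ext_iff]
    rintro v w hvw rfl
    exact hvw
  rw [Set.ncard_eq_toFinset_card', ← edgeFinset, two_mul_card_edgeFinset,
    Nat.card_eq_fintype_card, Nat.card_eq_fintype_card, Fintype.card_subtype,
    Fintype.card_subtype, ← hdiag, filter_congr fun x _ => hadj x, add_comm,
    ← filter_filter, ← filter_filter, card_filter_add_card_filter_not]

theorem Nat.choose_two_eq_of_two_mul_add_eq {m n : ℕ} (h : 2 * m + n = n * n) :
    n.choose 2 = m := by
  rw [Nat.choose_two_right, Nat.mul_sub_one]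
  omega

theorem FiniteField.pow_pow_pow_eq_self {K : Type*} [Field K] [Fintype K] {p m n : ℕ}
    (h : Fintype.card K = p ^ (m + n)) (x : K) : (x ^ p ^ m) ^ p ^ n = x := by
  rw [← pow_mul, ← pow_add, ← h, FiniteField.pow_card]

namespace GHPolarityGraph

variable {F : Type*} [Field F] {e : ℕ}

def Rel (e : ℕ) (p r : F × F × F × F × F) : Prop :=
  p.2.1 + r.2.2.2.1 ^ (3 ^ e) = p.1 * r.1 ^ (3 ^ (e + 1)) ∧
  p.2.2.1 + r.2.2.2.2 ^ (3 ^ e) = p.1 ^ 2 * r.1 ^ (3 ^ (e + 1)) ∧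
  p.2.2.2.1 + r.2.1 ^ (3 ^ (e + 1)) = p.1 ^ 3 * r.1 ^ (3 ^ (e + 1)) ∧
  p.2.2.2.2 + r.2.2.1 ^ (3 ^ (e + 1)) = p.1 ^ 3 * r.1 ^ (2 * 3 ^ (e + 1))

theorem eq_fromRel : GHPolarityGraph e F = SimpleGraph.fromRel (Rel e) := rfl

def solveLeft (e : ℕ) (a : F) (r : F × F × F × F × F) : F × F × F × F × F :=
  (a, a * r.1 ^ (3 ^ (e + 1)) - r.2.2.2.1 ^ (3 ^ e),
    a ^ 2 * r.1 ^ (3 ^ (e + 1)) - r.2.2.2.2 ^ (3 ^ e),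
    a ^ 3 * r.1 ^ (3 ^ (e + 1)) - r.2.1 ^ (3 ^ (e + 1)),
    a ^ 3 * r.1 ^ (2 * 3 ^ (e + 1)) - r.2.2.1 ^ (3 ^ (e + 1)))

theorem rel_solveLeft (a : F) (r : F × F × F × F × F) : Rel e (solveLeft e a r) r := by
  simp only [Rel, solveLeft, sub_add_cancel, and_self]

theorem solveLeft_eq_of_rel {p r : F × F × F × F × F} (h : Rel e p r) :
    solveLeft e p.1 r = p := by
  obtain ⟨h₁, h₂, h₃, h₄⟩ := h
  simp only [solveLeft, ← h₁, ← h₂, ← h₃, ← h₄, add_sub_cancel_right]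

def relEquiv (e : ℕ) :
    {x : (F × F × F × F × F) × (F × F × F × F × F) // Rel e x.1 x.2} ≃
      F × F × F × F × F × F where
  toFun x := (x.1.1.1, x.1.2)
  invFun w := ⟨(solveLeft e w.1 w.2, w.2), rel_solveLeft w.1 w.2⟩
  left_inv x := Subtype.ext (Prod.ext (solveLeft_eq_of_rel x.2) rfl)
  right_inv _ := rfl

def loop (e : ℕ) (a u v : F) : F × F × F × F × F :=
  (a, a * a ^ 3 ^ (e + 1) - u ^ 3 ^ e, a ^ 2 * a ^ 3 ^ (e + 1) - v ^ 3 ^ e, u, v)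

theorem loop_eq_of_rel {r : F × F × F × F × F} (h : Rel e r r) :
    loop e r.1 r.2.2.2.1 r.2.2.2.2 = r := by
  obtain ⟨h₁, h₂, -, -⟩ := h
  simp only [loop, ← h₁, ← h₂, add_sub_cancel_right]

section Twist

variable [Fintype F] (hF : Fintype.card F = 3 ^ (2 * e + 1))
include hF

theorem pow_three_pow_succ_pow_three_pow (x : F) : (x ^ 3 ^ (e + 1)) ^ 3 ^ e = x :=
  FiniteField.pow_pow_pow_eq_self (by rw [hF]; ring_nf) x

theorem pow_three_pow_pow_three_pow_succ (x : F) : (x ^ 3 ^ e) ^ 3 ^ (e + 1) = x :=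
  FiniteField.pow_pow_pow_eq_self (by rw [hF]; ring_nf) x

theorem pow_three_pow_succ_pow_three_pow_succ (x : F) :
    (x ^ 3 ^ (e + 1)) ^ 3 ^ (e + 1) = x ^ 3 := by
  calc (x ^ 3 ^ (e + 1)) ^ 3 ^ (e + 1) = ((x ^ 3 ^ (e + 1)) ^ 3 ^ e) ^ 3 := by
        rw [← pow_mul _ (3 ^ e) 3, ← pow_succ]
    _ = x ^ 3 := by rw [pow_three_pow_succ_pow_three_pow hF]

theorem injective_pow_three_pow_succ : Function.Injective fun x : F => x ^ 3 ^ (e + 1) :=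
  Function.LeftInverse.injective (g := fun x => x ^ 3 ^ e)
    (pow_three_pow_succ_pow_three_pow hF)

variable [CharP F 3]

theorem add_pow_eq_mul_iff {a b x y : F} :
    a + b ^ 3 ^ e = x * y ^ 3 ^ (e + 1) ↔ b + a ^ 3 ^ (e + 1) = y ^ 3 * x ^ 3 ^ (e + 1) := by
  rw [← (injective_pow_three_pow_succ hF).eq_iff]
  simp only [add_pow_char_pow, mul_pow, pow_three_pow_pow_three_pow_succ hF,
    pow_three_pow_succ_pow_three_pow_succ hF]
  rw [add_comm b, mul_comm (y ^ 3)]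

theorem add_pow_eq_sq_mul_iff {a b x y : F} :
    a + b ^ 3 ^ e = x ^ 2 * y ^ 3 ^ (e + 1) ↔
      b + a ^ 3 ^ (e + 1) = y ^ 3 * x ^ (2 * 3 ^ (e + 1)) := by
  rw [← (injective_pow_three_pow_succ hF).eq_iff]
  simp only [add_pow_char_pow, mul_pow, pow_three_pow_pow_three_pow_succ hF,
    pow_three_pow_succ_pow_three_pow_succ hF, ← pow_mul]
  rw [add_comm b, mul_comm (y ^ 3)]

theorem rel_symm : Std.Symm (Rel e : F × F × F × F × F → _ → Prop) where
  symm _ _ := fun ⟨h₁, h₂, h₃, h₄⟩ =>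
    ⟨(add_pow_eq_mul_iff hF).2 h₃, (add_pow_eq_sq_mul_iff hF).2 h₄,
      (add_pow_eq_mul_iff hF).1 h₁, (add_pow_eq_sq_mul_iff hF).1 h₂⟩

theorem rel_loop (a u v : F) : Rel e (loop e a u v) (loop e a u v) :=
  have h₁ : (loop e a u v).2.1 + u ^ 3 ^ e = a * a ^ 3 ^ (e + 1) := sub_add_cancel _ _
  have h₂ : (loop e a u v).2.2.1 + v ^ 3 ^ e = a ^ 2 * a ^ 3 ^ (e + 1) := sub_add_cancel _ _
  ⟨h₁, h₂, (add_pow_eq_mul_iff hF).1 h₁, (add_pow_eq_sq_mul_iff hF).1 h₂⟩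

def loopEquiv : {r : F × F × F × F × F // Rel e r r} ≃ F × F × F where
  toFun r := (r.1.1, r.1.2.2.2.1, r.1.2.2.2.2)
  invFun w := ⟨loop e w.1 w.2.1 w.2.2, rel_loop hF w.1 w.2.1 w.2.2⟩
  left_inv r := Subtype.ext (loop_eq_of_rel r.2)
  right_inv _ := rfl

end Twist

end GHPolarityGraph

open GHPolarityGraph in
theorem card_edgeSet_GHPolarityGraph_general
    (e : ℕ) (q : ℕ) (hq : q = 3 ^ (2 * e + 1))
    (F : Type*) [Field F] [Fintype F] (hF : Fintype.card F = q) :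
    (GHPolarityGraph e F).edgeSet.ncard = (q ^ 6 - q ^ 3) / 2 ∧
    (GHPolarityGraph e F).edgeSet.ncard = Nat.choose (q ^ 3) 2 := by
  have hF' : Fintype.card F = 3 ^ (2 * e + 1) := hF.trans hq
  have : Fact (Nat.Prime 3) := ⟨Nat.prime_three⟩
  have := charP_of_card_eq_prime_pow hF'
  have := rel_symm hF'
  have hcount : 2 * (GHPolarityGraph e F).edgeSet.ncard + q ^ 3 = q ^ 3 * q ^ 3 := by
    have h := SimpleGraph.two_mul_ncard_edgeSet_fromRel_add (Rel e (F := F))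
    rw [Nat.card_congr (loopEquiv hF'), Nat.card_congr (relEquiv e)] at h
    simp only [Nat.card_eq_fintype_card, Fintype.card_prod, hF] at h
    rw [eq_fromRel]
    linear_combination h
  refine ⟨?_, (Nat.choose_two_eq_of_two_mul_add_eq hcount).symm⟩
  rw [show q ^ 6 = q ^ 3 * q ^ 3 by ring]
  omega

theorem card_edgeSet_GHPolarityGraph
    (e : ℕ) (he : 1 ≤ e) (q : ℕ) (hq : q = 3 ^ (2 * e + 1))
    (F : Type*) [Field F] [Fintype F] (hF : Fintype.card F = q) :
    (GHPolarityGraph e F).edgeSet.ncard = (q ^ 6 - q ^ 3) / 2 ∧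
    (GHPolarityGraph e F).edgeSet.ncard = Nat.choose (q ^ 3) 2 :=
  card_edgeSet_GHPolarityGraph_general e q hq F hF
end

section
/- Let q = 3^e with e ≥ 1, and let F_q be the finite field with q elements. For all p = (p₁,...,p₅) and ℓ = (ℓ₁,...,ℓ₅) in F_q⁵, the system of equations p₂+ℓ₂ = p₁ℓ₁, p₃+ℓ₃ = p₁ℓ₂, p₄+ℓ₄ = p₁ℓ₃, p₅+ℓ₅ = p₂ℓ₃ − p₃ℓ₂ holds if and only if the system p₂'+ℓ₂' = p₁'ℓ₁', p₃'+ℓ₃' = (p₁')²ℓ₁', p₄'+ℓ₄' = (p₁')³ℓ₁', p₅'+ℓ₅' = (p₁')³(ℓ₁')² holds, where (p₁',p₂',p₃',p₄',p₅') = (p₁, p₂, p₃ + p₁p₂, p₄ + p₁p₃ + p₁²p₂, −p₅ + p₂²p₁ − p₂p₃) and (ℓ₁',ℓ₂',ℓ₃',ℓ₄',ℓ₅') = (ℓ₁, ℓ₂, ℓ₃, ℓ₄, −ℓ₅ + ℓ₂ℓ₃). Consequently the explicit map φ given by these coordinate transformations is an isomorphism between the bipartite graph Γ_q (defined by the first system)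 and the bipartite graph GH_q (defined by the second system), each with parts two copies of F_q⁵. -/
/-- The adjacency system defining the bipartite graph `Γ_q` (biaffine part of the
classical generalized hexagon): `p₂+ℓ₂ = p₁ℓ₁`, `p₃+ℓ₃ = p₁ℓ₂`, `p₄+ℓ₄ = p₁ℓ₃`,
`p₅+ℓ₅ = p₂ℓ₃ − p₃ℓ₂`. -/
def hexSys {F : Type*} [Field F] (p l : F × F × F × F × F) : Prop :=
  p.2.1 + l.2.1 = p.1 * l.1 ∧
  p.2.2.1 + l.2.2.1 = p.1 * l.2.1 ∧
  p.2.2.2.1 + l.2.2.2.1 = p.1 * l.2.2.1 ∧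
  p.2.2.2.2 + l.2.2.2.2 = p.2.1 * l.2.2.1 - p.2.2.1 * l.2.1

/-- The adjacency system defining the bipartite graph `GH_q`:
`p₂+ℓ₂ = p₁ℓ₁`, `p₃+ℓ₃ = p₁²ℓ₁`, `p₄+ℓ₄ = p₁³ℓ₁`, `p₅+ℓ₅ = p₁³ℓ₁²`. -/
def hexSys' {F : Type*} [Field F] (p l : F × F × F × F × F) : Prop :=
  p.2.1 + l.2.1 = p.1 * l.1 ∧
  p.2.2.1 + l.2.2.1 = p.1 ^ 2 * l.1 ∧
  p.2.2.2.1 + l.2.2.2.1 = p.1 ^ 3 * l.1 ∧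
  p.2.2.2.2 + l.2.2.2.2 = p.1 ^ 3 * l.1 ^ 2

/-- The coordinate transformation on points:
`(p₁, p₂, p₃ + p₁p₂, p₄ + p₁p₃ + p₁²p₂, −p₅ + p₂²p₁ − p₂p₃)`. -/
def hexPointMap {F : Type*} [Field F] (p : F × F × F × F × F) : F × F × F × F × F :=
  (p.1, p.2.1, p.2.2.1 + p.1 * p.2.1,
    p.2.2.2.1 + p.1 * p.2.2.1 + p.1 ^ 2 * p.2.1,
    -p.2.2.2.2 + p.2.1 ^ 2 * p.1 - p.2.1 * p.2.2.1)

/-- The coordinate transformation on lines: `(ℓ₁, ℓ₂, ℓ₃, ℓ₄, −ℓ₅ + ℓ₂ℓ₃)`. -/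
def hexLineMap {F : Type*} [Field F] (l : F × F × F × F × F) : F × F × F × F × F :=
  (l.1, l.2.1, l.2.2.1, l.2.2.2.1, -l.2.2.2.2 + l.2.1 * l.2.2.1)

/-- The bipartite graph on two copies of `F⁵` determined by an incidence system:
a point `inl p` is adjacent to a line `inr ℓ` exactly when `sys p ℓ` holds. -/
def bipartiteGraph {F : Type*} [Field F]
    (sys : (F × F × F × F × F) → (F × F × F × F × F) → Prop) :
    SimpleGraph ((F × F × F × F × F) ⊕ (F × F × F × F × F)) :=
  SimpleGraph.fromRel (fun u v => ∃ p l, u = Sum.inl p ∧ v = Sum.inr l ∧ sys p l)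


section Aux
variable {F : Type*} [Field F]

/-- Inverse of `hexPointMap`. -/
def hexPointInv (p : F × F × F × F × F) : F × F × F × F × F :=
  (p.1, p.2.1, p.2.2.1 - p.1 * p.2.1, p.2.2.2.1 - p.1 * p.2.2.1,
    -p.2.2.2.2 + 2 * p.1 * p.2.1 ^ 2 - p.2.1 * p.2.2.1)

/-- Inverse of `hexLineMap`. -/
def hexLineInv (l : F × F × F × F × F) : F × F × F × F × F :=
  (l.1, l.2.1, l.2.2.1, l.2.2.2.1, -l.2.2.2.2 + l.2.1 * l.2.2.1)

def hexPointEquiv : (F × F × F × F × F) ≃ (F × F × F × F × F) where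
  toFun := hexPointMap
  invFun := hexPointInv
  left_inv := by
    rintro ⟨a, b, c, d, e⟩
    simp only [hexPointMap, hexPointInv, Prod.mk.injEq]
    refine ⟨trivial, trivial, by ring, by ring, by ring⟩
  right_inv := by
    rintro ⟨a, b, c, d, e⟩
    simp only [hexPointMap, hexPointInv, Prod.mk.injEq]
    refine ⟨trivial, trivial, by ring, by ring, by ring⟩

def hexLineEquiv : (F × F × F × F × F) ≃ (F × F × F × F × F) where
  toFun := hexLineMap
  invFun := hexLineInv
  left_inv := by
    rintro ⟨a, b, c, d, e⟩
    simp only [hexLineMap, hexLineInv, Prod.mk.injEq]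
    refine ⟨trivial, trivial, trivial, trivial, by ring⟩
  right_inv := by
    rintro ⟨a, b, c, d, e⟩
    simp only [hexLineMap, hexLineInv, Prod.mk.injEq]
    refine ⟨trivial, trivial, trivial, trivial, by ring⟩

theorem hexSys_iff_of_char3 (hc : (3 : F) = 0) (p l : F × F × F × F × F) :
    hexSys p l ↔ hexSys' (hexPointMap p) (hexLineMap l) := by
  obtain ⟨p1, p2, p3, p4, p5⟩ := p
  obtain ⟨l1, l2, l3, l4, l5⟩ := l
  simp only [hexSys, hexSys', hexPointMap, hexLineMap]
  constructor
  · rintro ⟨h1, h2, h3, h4⟩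
    refine ⟨h1, by linear_combination h2 + p1 * h1,
      by linear_combination h3 + p1 * h2 + p1 ^ 2 * h1,
      by linear_combination (-1 : F) * h4 + (2 * p2 + l2) * h2
        + p1 * (p1 * l1 + p2 + l2) * h1 + (-(p2 * l3) - p2 * p3) * hc⟩
  · rintro ⟨h1, h2, h3, h4⟩
    refine ⟨h1, by linear_combination h2 - p1 * h1,
      by linear_combination h3 - p1 * h2,
      by linear_combination (-1 : F) * h4 + (2 * p2 + l2) * h2
        + (p1 * (p1 * l1 + p2 + l2) - p1 * (2 * p2 + l2)) * h1
        + (-(p2 * l3) - p2 * p3) * hc⟩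

end Aux

theorem hexSys_iff_and_iso
    (e : ℕ) (he : 1 ≤ e) (q : ℕ) (hq : q = 3 ^ e)
    (F : Type*) [Field F] [Fintype F] (hF : Fintype.card F = q) :
    (∀ p l : F × F × F × F × F,
        hexSys p l ↔ hexSys' (hexPointMap p) (hexLineMap l)) ∧
    ∃ φ : bipartiteGraph (hexSys (F := F)) ≃g bipartiteGraph (hexSys' (F := F)),
      (∀ p, φ (Sum.inl p) = Sum.inl (hexPointMap p)) ∧
      (∀ l, φ (Sum.inr l) = Sum.inr (hexLineMap l)) := by
  have hc3 : (3 : F) = 0 := by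
    have h := FiniteField.cast_card_eq_zero F
    rw [hF, hq, Nat.cast_pow, Nat.cast_ofNat] at h
    exact pow_eq_zero_iff (by omega) |>.mp h
  have hiff := hexSys_iff_of_char3 (F := F) hc3
  refine ⟨hiff, ?_⟩
  refine ⟨⟨Equiv.sumCongr hexPointEquiv hexLineEquiv, ?_⟩, fun p => rfl, fun l => rfl⟩
  rintro (a | a) (b | b) <;>
    simp only [bipartiteGraph, SimpleGraph.fromRel_adj, Equiv.sumCongr_apply, Sum.map_inl,
      Sum.map_inr, Sum.inl.injEq, Sum.inr.injEq, ne_eq, reduceCtorEq, Sum.inl_injective.ne_iff,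
      Sum.inr_injective.ne_iff, hexPointEquiv, hexLineEquiv, Equiv.coe_fn_mk,
      exists_and_left, exists_eq_left', false_and, and_false, exists_false, or_self,
      not_false_eq_true, true_and, or_false, false_or]
  · exact (hiff a b).symm
  · exact (hiff b a).symm
end

section
/- Let m ≥ 3 be an odd integer, let q be a prime power, and for each j with 2 ≤ j ≤ m let f_j : F_q^{2j−2} → F_q be an arbitrary function. Let Γ_q be the bipartite graph with parts P and L, each a copy of F_q^m, where (p₁,...,p_m) ∈ P is adjacent to [ℓ₁,...,ℓ_m] ∈ L if and only if p_j + ℓ_j = f_j(ℓ₁, p₁, ℓ₂, p₂, ..., ℓ_{j−1}, p_{j−1}) for all 2 ≤ j ≤ m. Then Γ_q admits a complete partition into q^{(m+1)/2} parts; in particular ψ(Γ_q) ≥ q^{(m+1)/2} = √(e(Γ_q)). -/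
/-- The algebraically defined bipartite graph `Γ_q`: parts are two copies of `F^m`
(points `inl p` and lines `inr ℓ`), and `p` is adjacent to `ℓ` iff for each
`j` with `1 ≤ j < m` (0-indexed; these are the equations `j = 2, …, m` of the paper)
we have `p_j + ℓ_j = f_j(ℓ₀, p₀, …, ℓ_{j-1}, p_{j-1})`. -/
def algGraph (m : ℕ) (F : Type*) [Field F]
    (f : (j : Fin m) → (Fin (j : ℕ) → F) → (Fin (j : ℕ) → F) → F) :
    SimpleGraph ((Fin m → F) ⊕ (Fin m → F)) :=
  SimpleGraph.fromRel (fun u v => ∃ p l, u = Sum.inl p ∧ v = Sum.inr l ∧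
    ∀ j : Fin m, 0 < (j : ℕ) →
      p j + l j = f j (fun i => l (Fin.castLE j.isLt.le i))
        (fun i => p (Fin.castLE j.isLt.le i)))

section Aux
variable {m : ℕ} {F : Type*} [Field F]
/-- Given a point `p` and a starting value `t`, the unique line through `p`
with first coordinate `t`. -/
def lineVal (f : (j : Fin m) → (Fin (j : ℕ) → F) → (Fin (j : ℕ) → F) → F)
    (p : Fin m → F) (t : F) : Fin m → F := fun j =>
  if h1 : (j : ℕ) = 0 then t
  else f j (fun i => lineVal f p t ⟨i, i.2.trans j.2⟩) (fun i => p ⟨i, i.2.trans j.2⟩) - p j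
termination_by j => (j : ℕ)
decreasing_by exact i.2

lemma lineVal_zero (f : (j : Fin m) → (Fin (j : ℕ) → F) → (Fin (j : ℕ) → F) → F)
    (p : Fin m → F) (t : F) (j : Fin m) (hj : (j : ℕ) = 0) : lineVal f p t j = t := by
  rw [lineVal, dif_pos hj]

lemma lineVal_adj (f : (j : Fin m) → (Fin (j : ℕ) → F) → (Fin (j : ℕ) → F) → F)
    (p : Fin m → F) (t : F) (j : Fin m) (hj : 0 < (j : ℕ)) :
    p j + lineVal f p t j =
      f j (fun i => lineVal f p t (Fin.castLE j.isLt.le i))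
        (fun i => p (Fin.castLE j.isLt.le i)) := by
  conv_lhs => rw [lineVal, dif_neg (Nat.pos_iff_ne_zero.mp hj)]
  ring_nf
  rfl

lemma lineVal_unique (f : (j : Fin m) → (Fin (j : ℕ) → F) → (Fin (j : ℕ) → F) → F)
    (p l : Fin m → F) (hm0 : 0 < m)
    (h : ∀ j : Fin m, 0 < (j : ℕ) →
      p j + l j = f j (fun i => l (Fin.castLE j.isLt.le i))
        (fun i => p (Fin.castLE j.isLt.le i))) :
    l = lineVal f p (l ⟨0, hm0⟩) := by
  have key : ∀ n (hn : n < m), l ⟨n, hn⟩ = lineVal f p (l ⟨0, hm0⟩) ⟨n, hn⟩ := by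
    intro n
    induction n using Nat.strong_induction_on with
    | _ n ih =>
      intro hn
      rcases Nat.eq_zero_or_pos n with h0 | h0
      · subst h0
        rw [lineVal_zero _ _ _ _ rfl]
      · have := h ⟨n, hn⟩ h0
        rw [lineVal, dif_neg (Nat.pos_iff_ne_zero.mp h0)]
        have harg : (fun i : Fin n => l (Fin.castLE hn.le i)) =
            (fun i : Fin n => lineVal f p (l ⟨0, hm0⟩) ⟨(i : ℕ), i.2.trans hn⟩) := by
          funext i
          exact ih i i.2 (i.2.trans hn)
        rw [← harg]
        simp only [Fin.castLE] at this ⊢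
        linear_combination this
  funext j
  have := key j j.2
  simpa using this
/-- Joint construction of a point/line pair hitting prescribed colors `a` (point) and
`b` (line), for odd `m`. -/
def pe (hm : m % 2 = 1) (f : (j : Fin m) → (Fin (j : ℕ) → F) → (Fin (j : ℕ) → F) → F)
    (a b : Fin ((m + 1) / 2) → F) : Fin m → F × F := fun j =>
  if h1 : (j : ℕ) = 0 then (a ⟨0, by have := j.2; omega⟩, b ⟨0, by have := j.2; omega⟩)
  else if h2 : (j : ℕ) % 2 = 1 then
    (a ⟨((j : ℕ) + 1) / 2, by have := j.2; omega⟩,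
      f j (fun i => (pe hm f a b ⟨i, i.2.trans j.2⟩).2)
        (fun i => (pe hm f a b ⟨i, i.2.trans j.2⟩).1)
        - a ⟨((j : ℕ) + 1) / 2, by have := j.2; omega⟩)
  else
    (f j (fun i => (pe hm f a b ⟨i, i.2.trans j.2⟩).2)
        (fun i => (pe hm f a b ⟨i, i.2.trans j.2⟩).1)
        - b ⟨(j : ℕ) / 2, by have := j.2; omega⟩,
      b ⟨(j : ℕ) / 2, by have := j.2; omega⟩)
termination_by j => (j : ℕ)
decreasing_by all_goals exact i.2

lemma pe_adj (hm : m % 2 = 1) (f : (j : Fin m) → (Fin (j : ℕ) → F) → (Fin (j : ℕ) → F) → F)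
    (a b : Fin ((m + 1) / 2) → F) (j : Fin m) (hj : 0 < (j : ℕ)) :
    (pe hm f a b j).1 + (pe hm f a b j).2 =
      f j (fun i => (pe hm f a b (Fin.castLE j.isLt.le i)).2)
        (fun i => (pe hm f a b (Fin.castLE j.isLt.le i)).1) := by
  conv_lhs => rw [pe]
  rw [dif_neg (Nat.pos_iff_ne_zero.mp hj)]
  split
  · simp only
    ring_nf
    rfl
  · simp only
    ring_nf
    rfl

lemma pe_fst_zero (hm : m % 2 = 1)
    (f : (j : Fin m) → (Fin (j : ℕ) → F) → (Fin (j : ℕ) → F) → F)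
    (a b : Fin ((m + 1) / 2) → F) (j : Fin m) (hj : (j : ℕ) = 0)
    (h0 : 0 < (m + 1) / 2) : (pe hm f a b j).1 = a ⟨0, h0⟩ := by
  rw [pe, dif_pos hj]

lemma pe_snd_zero (hm : m % 2 = 1)
    (f : (j : Fin m) → (Fin (j : ℕ) → F) → (Fin (j : ℕ) → F) → F)
    (a b : Fin ((m + 1) / 2) → F) (j : Fin m) (hj : (j : ℕ) = 0)
    (h0 : 0 < (m + 1) / 2) : (pe hm f a b j).2 = b ⟨0, h0⟩ := by
  rw [pe, dif_pos hj]

lemma pe_fst_odd (hm : m % 2 = 1)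
    (f : (j : Fin m) → (Fin (j : ℕ) → F) → (Fin (j : ℕ) → F) → F)
    (a b : Fin ((m + 1) / 2) → F) (j : Fin m) (hj : (j : ℕ) % 2 = 1)
    (hb : ((j : ℕ) + 1) / 2 < (m + 1) / 2) :
    (pe hm f a b j).1 = a ⟨((j : ℕ) + 1) / 2, hb⟩ := by
  rw [pe, dif_neg (by omega), dif_pos hj]

lemma pe_snd_even (hm : m % 2 = 1)
    (f : (j : Fin m) → (Fin (j : ℕ) → F) → (Fin (j : ℕ) → F) → F)
    (a b : Fin ((m + 1) / 2) → F) (j : Fin m) (hj0 : (j : ℕ) ≠ 0)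
    (hj : (j : ℕ) % 2 = 0) (hb : (j : ℕ) / 2 < (m + 1) / 2) :
    (pe hm f a b j).2 = b ⟨(j : ℕ) / 2, hb⟩ := by
  rw [pe, dif_neg hj0, dif_neg (by omega)]
end Aux

theorem algGraph_odd_completePartition
    (m : ℕ) (hm : 3 ≤ m) (hmodd : Odd m) (q : ℕ) (hq : IsPrimePow q)
    (F : Type*) [Field F] [Fintype F] (hF : Fintype.card F = q)
    (f : (j : Fin m) → (Fin (j : ℕ) → F) → (Fin (j : ℕ) → F) → F) :
    (∃ c : ((Fin m → F) ⊕ (Fin m → F)) → Fin (q ^ ((m + 1) / 2)),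
        IsCompletePartition (algGraph m F f) c) ∧
    q ^ ((m + 1) / 2) ≤ pseudoAchromatic (algGraph m F f) ∧
    (algGraph m F f).edgeSet.ncard = q ^ (m + 1) ∧
    q ^ ((m + 1) / 2) = Nat.sqrt ((algGraph m F f).edgeSet.ncard) := by
  have hm1 : m % 2 = 1 := Nat.odd_iff.mp hmodd
  have hm0 : 0 < m := by omega
  have hq2 : 2 ≤ q := hq.two_le
  -- the color equivalence
  have hcard : Fintype.card (Fin ((m + 1) / 2) → F) = q ^ ((m + 1) / 2) := by
    simp [hF]
  let e : (Fin ((m + 1) / 2) → F) ≃ Fin (q ^ ((m + 1) / 2)) :=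
    Fintype.equivFinOfCardEq hcard
  -- coloring
  let pcIdx : Fin ((m + 1) / 2) → Fin m := fun i =>
    ⟨if (i : ℕ) = 0 then 0 else 2 * (i : ℕ) - 1, by have := i.2; split <;> omega⟩
  let lcIdx : Fin ((m + 1) / 2) → Fin m := fun i =>
    ⟨2 * (i : ℕ), by have := i.2; omega⟩
  let c : ((Fin m → F) ⊕ (Fin m → F)) → Fin (q ^ ((m + 1) / 2)) :=
    Sum.elim (fun p => e (fun i => p (pcIdx i))) (fun l => e (fun i => l (lcIdx i)))
  have hc : IsCompletePartition (algGraph m F f) c := by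
    intro i j hij
    set a := e.symm i with ha
    set b := e.symm j with hb
    refine ⟨Sum.inl (fun x => (pe hm1 f a b x).1), Sum.inr (fun x => (pe hm1 f a b x).2),
      ?_, ?_, ?_⟩
    · show e (fun i' => (pe hm1 f a b (pcIdx i')).1) = i
      have : (fun i' => (pe hm1 f a b (pcIdx i')).1) = a := by
        funext i'
        by_cases h0 : (i' : ℕ) = 0
        · rw [pe_fst_zero hm1 f a b (pcIdx i') (by simp [pcIdx, h0]) (by omega)]
          congr 1
          exact Fin.ext h0.symm
        · have hval : ((pcIdx i') : ℕ) = 2 * (i' : ℕ) - 1 := by simp [pcIdx, h0]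
          rw [pe_fst_odd hm1 f a b (pcIdx i') (by omega) (by have := i'.2; omega)]
          congr 1
          apply Fin.ext
          simp only [pcIdx, Fin.val_mk, if_neg h0]
          omega
      rw [this, ha, e.apply_symm_apply]
    · show e (fun i' => (pe hm1 f a b (lcIdx i')).2) = j
      have : (fun i' => (pe hm1 f a b (lcIdx i')).2) = b := by
        funext i'
        have hval : ((lcIdx i') : ℕ) = 2 * (i' : ℕ) := rfl
        by_cases h0 : (i' : ℕ) = 0
        · rw [pe_snd_zero hm1 f a b (lcIdx i') (by omega) (by omega)]
          congr 1
          exact Fin.ext h0.symm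
        · rw [pe_snd_even hm1 f a b (lcIdx i') (by omega) (by omega)
            (by have := i'.2; omega)]
          congr 1
          apply Fin.ext
          simp only [hval]
          omega
      rw [this, hb, e.apply_symm_apply]
    · rw [algGraph, SimpleGraph.fromRel_adj]
      refine ⟨by simp, Or.inl ⟨_, _, rfl, rfl, ?_⟩⟩
      intro j' hj'
      exact pe_adj hm1 f a b j' hj'
  -- edge count
  have hedge : (algGraph m F f).edgeSet.ncard = q ^ (m + 1) := by
    have hmem : ∀ (p : Fin m → F) (t : F),
        s(Sum.inl p, Sum.inr (lineVal f p t)) ∈ (algGraph m F f).edgeSet := by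
      intro p t
      rw [SimpleGraph.mem_edgeSet, algGraph, SimpleGraph.fromRel_adj]
      exact ⟨by simp, Or.inl ⟨_, _, rfl, rfl, fun j' hj' => lineVal_adj f p t j' hj'⟩⟩
    let g : (Fin m → F) × F → ((algGraph m F f).edgeSet : Set _) :=
      fun x => ⟨s(Sum.inl x.1, Sum.inr (lineVal f x.1 x.2)), hmem x.1 x.2⟩
    have hginj : Function.Injective g := by
      rintro ⟨p, t⟩ ⟨p', t'⟩ hxy
      have h1 : s(Sum.inl p, Sum.inr (lineVal f p t)) =
          s(Sum.inl p', Sum.inr (lineVal f p' t')) := congrArg Subtype.val hxy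
      rw [Sym2.eq_iff] at h1
      rcases h1 with ⟨h2, h3⟩ | ⟨h2, h3⟩
      · obtain rfl : p = p' := Sum.inl.inj h2
        have h4 : lineVal f p t = lineVal f p t' := Sum.inr.inj h3
        have h5 := congrFun h4 ⟨0, hm0⟩
        rw [lineVal_zero f p t ⟨0, hm0⟩ rfl, lineVal_zero f p t' ⟨0, hm0⟩ rfl] at h5
        rw [h5]
      · exact absurd h2 (by simp)
    have hgsurj : Function.Surjective g := by
      rintro ⟨ed, hed⟩
      induction ed using Sym2.ind with
      | _ u v =>
        rw [SimpleGraph.mem_edgeSet, algGraph, SimpleGraph.fromRel_adj] at hed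
        obtain ⟨hne, ⟨p, l, rfl, rfl, hrel⟩ | ⟨p, l, rfl, rfl, hrel⟩⟩ := hed
        · refine ⟨(p, l ⟨0, hm0⟩), Subtype.ext ?_⟩
          show s(Sum.inl p, Sum.inr (lineVal f p (l ⟨0, hm0⟩))) = s(Sum.inl p, Sum.inr l)
          rw [← lineVal_unique f p l hm0 hrel]
        · refine ⟨(p, l ⟨0, hm0⟩), Subtype.ext ?_⟩
          show s(Sum.inl p, Sum.inr (lineVal f p (l ⟨0, hm0⟩))) = s(Sum.inr l, Sum.inl p)
          rw [← lineVal_unique f p l hm0 hrel, Sym2.eq_swap]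
    have hncard : Nat.card ((algGraph m F f).edgeSet : Set _) =
        Nat.card ((Fin m → F) × F) :=
      (Nat.card_eq_of_bijective g ⟨hginj, hgsurj⟩).symm
    rw [← Nat.card_coe_set_eq, hncard, Nat.card_eq_fintype_card,
      Fintype.card_prod, Fintype.card_fun, Fintype.card_fin, hF, pow_succ]
  refine ⟨⟨c, hc⟩, ?_, hedge, ?_⟩
  · -- pseudo-achromatic bound
    have hVcard : 0 < Fintype.card ((Fin m → F) ⊕ (Fin m → F)) := Fintype.card_pos
    apply le_csSup
    · refine ⟨Fintype.card ((Fin m → F) ⊕ (Fin m → F)), ?_⟩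
      rintro r ⟨c', hc'⟩
      rcases le_or_gt r 1 with hr | hr
      · omega
      · have hsurj : Function.Surjective c' := by
          intro i
          obtain ⟨j, hj⟩ := Fintype.exists_ne_of_one_lt_card (by simpa using hr) i
          obtain ⟨u, v, hu, hv, -⟩ := hc' j i hj
          exact ⟨v, hv⟩
        have := Fintype.card_le_of_surjective c' hsurj
        simpa using this
    · exact ⟨c, hc⟩
  · -- square root
    conv_rhs => rw [hedge, show m + 1 = (m + 1) / 2 * 2 from by omega, pow_mul,
      Nat.sqrt_eq']
end

section
/- Let m ≥ 2 be an even integer, let q be a prime power, and for each j with 2 ≤ j ≤ m let f_j : F_{q²}^{2j−2} → F_{q²} be an arbitrary function. Let Γ_{q²} be the bipartite graph with parts P and L, each a copy of F_{q²}^m, where (p₁,...,p_m) ∈ P is adjacent to [ℓ₁,...,ℓ_m] ∈ L if and only if p_j + ℓ_j = f_j(ℓ₁, p₁, ℓ₂, p₂, ..., ℓ_{j−1}, p_{j−1}) for all 2 ≤ j ≤ m. Then Γ_{q²} admits a complete partition into q^{m+1} parts; in particular ψ(Γ_{q²}) ≥ q^{m+1} = √(e(Γ_{q²})). -/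
namespace AlgAux

variable {F : Type*} [Field F] {m : ℕ}

/-- The relation defining the bipartite adjacency. -/
def R (f : (j : Fin m) → (Fin (j : ℕ) → F) → (Fin (j : ℕ) → F) → F)
    (p l : Fin m → F) : Prop :=
  ∀ j : Fin m, 0 < (j : ℕ) →
    p j + l j = f j (fun i => l (Fin.castLE j.isLt.le i))
      (fun i => p (Fin.castLE j.isLt.le i))

/-- Recursive construction of a (point, line) pair coordinate by coordinate.
At each coordinate `n ≥ 1`, the value `s = f_n` of the right-hand side of the
defining equation is computed from the earlier coordinates, and `step n s`
chooses how to split `s` into the pair `(p_n, ℓ_n)`. -/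
noncomputable def bv (f : (j : Fin m) → (Fin (j : ℕ) → F) → (Fin (j : ℕ) → F) → F)
    (step : ℕ → F → F × F) (init : F × F) : (n : ℕ) → Fin n → F × F
  | 0 => Fin.elim0
  | n + 1 => Fin.snoc (bv f step init n)
      (if n = 0 then init
       else if hm : n < m then
         step n (f ⟨n, hm⟩ (fun i => (bv f step init n ⟨i, i.isLt⟩).2)
                           (fun i => (bv f step init n ⟨i, i.isLt⟩).1))
       else (0, 0))

lemma bv_agree (f : (j : Fin m) → (Fin (j : ℕ) → F) → (Fin (j : ℕ) → F) → F)
    (step : ℕ → F → F × F) (init : F × F) :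
    ∀ (n j : ℕ) (hj : j < n),
      bv f step init n ⟨j, hj⟩ = bv f step init (j + 1) (Fin.last j)
  | n + 1, j, hj => by
    rcases Nat.lt_succ_iff_lt_or_eq.mp hj with h | rfl
    · have he : (⟨j, hj⟩ : Fin (n + 1)) = Fin.castSucc ⟨j, h⟩ := rfl
      rw [he, bv, Fin.snoc_castSucc]
      exact bv_agree f step init n j h
    · rfl

lemma bv_last (f : (j : Fin m) → (Fin (j : ℕ) → F) → (Fin (j : ℕ) → F) → F)
    (step : ℕ → F → F × F) (init : F × F) (j : ℕ) (h0 : j ≠ 0) (hm : j < m) :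
    bv f step init (j + 1) (Fin.last j)
      = step j (f ⟨j, hm⟩ (fun i => (bv f step init j ⟨i, i.isLt⟩).2)
                          (fun i => (bv f step init j ⟨i, i.isLt⟩).1)) := by
  rw [bv, Fin.snoc_last]
  simp [h0, hm]

lemma bv_zero (f : (j : Fin m) → (Fin (j : ℕ) → F) → (Fin (j : ℕ) → F) → F)
    (step : ℕ → F → F × F) (init : F × F) (n : ℕ) (h : 0 < n) :
    bv f step init n ⟨0, h⟩ = init := by
  rw [bv_agree, bv, Fin.snoc_last]
  simp

lemma bv_eval (f : (j : Fin m) → (Fin (j : ℕ) → F) → (Fin (j : ℕ) → F) → F)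
    (step : ℕ → F → F × F) (init : F × F) (n j : ℕ) (hj : j < n) (h0 : j ≠ 0) (hm : j < m) :
    bv f step init n ⟨j, hj⟩
      = step j (f ⟨j, hm⟩ (fun i => (bv f step init n ⟨i, i.isLt.trans hj⟩).2)
                          (fun i => (bv f step init n ⟨i, i.isLt.trans hj⟩).1)) := by
  rw [bv_agree f step init n j hj, bv_last f step init j h0 hm]
  congr 1
  congr 1
  · funext i
    exact congrArg Prod.snd ((bv_agree f step init j i i.isLt).trans
      (bv_agree f step init n i (i.isLt.trans hj)).symm)
  · funext i
    exact congrArg Prod.fst ((bv_agree f step init j i i.isLt).trans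
      (bv_agree f step init n i (i.isLt.trans hj)).symm)

/-- If the step function always splits `s` into a pair summing to `s`, the
constructed pair of vectors satisfies the defining relation. -/
lemma bv_R (f : (j : Fin m) → (Fin (j : ℕ) → F) → (Fin (j : ℕ) → F) → F)
    (step : ℕ → F → F × F) (hstep : ∀ j s, j ≠ 0 → (step j s).1 + (step j s).2 = s)
    (init : F × F) :
    R f (fun j => (bv f step init m j).1) (fun j => (bv f step init m j).2) := by
  rintro ⟨jv, hjm⟩ hj
  have h0 : jv ≠ 0 := Nat.pos_iff_ne_zero.mp hj
  show (bv f step init m ⟨jv, hjm⟩).1 + (bv f step init m ⟨jv, hjm⟩).2 = _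
  rw [bv_eval f step init m jv hjm h0 hjm, hstep jv _ h0]
  rfl

variable (hm0 : 0 < m)

/-- value of `l` at a natural-number index (junk `0` out of range). -/
def lv (l : Fin m → F) (n : ℕ) : F := if h : n < m then l ⟨n, h⟩ else 0

/-- step function reconstructing the unique point-neighbor of a line `l`. -/
def stepL (l : Fin m → F) : ℕ → F → F × F := fun n s => (s - lv l n, lv l n)

/-- The unique neighbor of the line `l` whose zeroth coordinate is `t`. -/
noncomputable def nbr (f : (j : Fin m) → (Fin (j : ℕ) → F) → (Fin (j : ℕ) → F) → F)
    (l : Fin m → F) (t : F) : Fin m → F :=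
  fun j => (bv f (stepL l) (t, l ⟨0, hm0⟩) m j).1

lemma nbr_snd (f : (j : Fin m) → (Fin (j : ℕ) → F) → (Fin (j : ℕ) → F) → F)
    (l : Fin m → F) (t : F) :
    ∀ j : Fin m, (bv f (stepL l) (t, l ⟨0, hm0⟩) m j).2 = l j := by
  rintro ⟨jv, hj⟩
  rcases Nat.eq_zero_or_pos jv with rfl | hpos
  · rw [bv_zero]
  · rw [bv_eval f _ _ m jv hj (by omega) hj]
    show lv l jv = _
    rw [lv, dif_pos hj]

lemma nbr_zero (f : (j : Fin m) → (Fin (j : ℕ) → F) → (Fin (j : ℕ) → F) → F)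
    (l : Fin m → F) (t : F) : nbr hm0 f l t ⟨0, hm0⟩ = t :=
  congrArg Prod.fst (bv_zero f (stepL l) (t, l ⟨0, hm0⟩) m hm0)

lemma nbr_R (f : (j : Fin m) → (Fin (j : ℕ) → F) → (Fin (j : ℕ) → F) → F)
    (l : Fin m → F) (t : F) : R f (nbr hm0 f l t) l := by
  have h2 : (fun j => (bv f (stepL l) (t, l ⟨0, hm0⟩) m j).2) = l :=
    funext (nbr_snd hm0 f l t)
  have := bv_R f (stepL l) (fun j s _ => by simp [stepL]) (t, l ⟨0, hm0⟩)
  rw [h2] at this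
  exact this

lemma nbr_unique (f : (j : Fin m) → (Fin (j : ℕ) → F) → (Fin (j : ℕ) → F) → F)
    (p l : Fin m → F) (hR : R f p l) :
    ∀ (jv : ℕ) (hj : jv < m),
      bv f (stepL l) (p ⟨0, hm0⟩, l ⟨0, hm0⟩) m ⟨jv, hj⟩ = (p ⟨jv, hj⟩, l ⟨jv, hj⟩) := by
  intro jv
  induction jv using Nat.strong_induction_on with
  | _ jv ih =>
    intro hj
    rcases Nat.eq_zero_or_pos jv with rfl | hpos
    · rw [bv_zero]
    · have h0 : jv ≠ 0 := by omega
      rw [bv_eval f _ _ m jv hj h0 hj]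
      have hA : (fun i : Fin ((⟨jv, hj⟩ : Fin m) : ℕ) =>
            (bv f (stepL l) (p ⟨0, hm0⟩, l ⟨0, hm0⟩) m ⟨i, i.isLt.trans hj⟩).2)
          = (fun i => l (Fin.castLE (Fin.mk jv hj).isLt.le i)) := by
        funext i
        exact congrArg Prod.snd (ih i i.isLt (i.isLt.trans hj))
      have hB : (fun i : Fin ((⟨jv, hj⟩ : Fin m) : ℕ) =>
            (bv f (stepL l) (p ⟨0, hm0⟩, l ⟨0, hm0⟩) m ⟨i, i.isLt.trans hj⟩).1)
          = (fun i => p (Fin.castLE (Fin.mk jv hj).isLt.le i)) := by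
        funext i
        exact congrArg Prod.fst (ih i i.isLt (i.isLt.trans hj))
      have hs : f ⟨jv, hj⟩ (fun i => (bv f (stepL l) (p ⟨0, hm0⟩, l ⟨0, hm0⟩) m
            ⟨i, i.isLt.trans hj⟩).2)
          (fun i => (bv f (stepL l) (p ⟨0, hm0⟩, l ⟨0, hm0⟩) m ⟨i, i.isLt.trans hj⟩).1)
          = p ⟨jv, hj⟩ + l ⟨jv, hj⟩ :=
        (congrArg₂ (f ⟨jv, hj⟩) hA hB).trans (hR ⟨jv, hj⟩ hpos).symm
      rw [hs]
      show (_ - lv l jv, lv l jv) = _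
      rw [lv, dif_pos hj, add_sub_cancel_right]

lemma nbr_eq (f : (j : Fin m) → (Fin (j : ℕ) → F) → (Fin (j : ℕ) → F) → F)
    (p l : Fin m → F) (hR : R f p l) : nbr hm0 f l (p ⟨0, hm0⟩) = p := by
  funext j
  obtain ⟨jv, hj⟩ := j
  exact congrArg Prod.fst (nbr_unique hm0 f p l hR jv hj)

end AlgAux

noncomputable def splitEquiv (p k : ℕ) :
    (Fin (k + k) → ZMod p) ≃+ ((Fin k → ZMod p) × (Fin k → ZMod p)) where
  toFun g := (fun i => g (Fin.castAdd k i), fun i => g (Fin.natAdd k i))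
  invFun x := Fin.append x.1 x.2
  left_inv g := by
    funext i
    refine Fin.addCases (fun i => ?_) (fun i => ?_) i
    · exact Fin.append_left _ _ i
    · exact Fin.append_right _ _ i
  right_inv x :=
    Prod.ext (funext fun i => Fin.append_left _ _ i) (funext fun i => Fin.append_right _ _ i)
  map_add' g h := rfl

theorem algGraph_even_completePartition
    (m : ℕ) (hm : 2 ≤ m) (hmeven : Even m) (q : ℕ) (hq : IsPrimePow q)
    (F : Type*) [Field F] [Fintype F] (hF : Fintype.card F = q ^ 2)
    (f : (j : Fin m) → (Fin (j : ℕ) → F) → (Fin (j : ℕ) → F) → F) :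
    (∃ c : ((Fin m → F) ⊕ (Fin m → F)) → Fin (q ^ (m + 1)),
        IsCompletePartition (algGraph m F f) c) ∧
    q ^ (m + 1) ≤ pseudoAchromatic (algGraph m F f) ∧
    (algGraph m F f).edgeSet.ncard = q ^ (2 * m + 2) ∧
    q ^ (m + 1) = Nat.sqrt ((algGraph m F f).edgeSet.ncard) := by
  classical
  have hm0 : 0 < m := by omega
  obtain ⟨pp, k, hpp', hk, hpk⟩ := hq
  have hpp : Nat.Prime pp := Nat.prime_iff.mpr hpp'
  haveI : Fact pp.Prime := ⟨hpp⟩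
  have hcard : Fintype.card F = pp ^ (k + k) := by
    rw [hF, ← hpk, ← pow_mul]
    congr 1
    omega
  -- the characteristic of F is pp
  have hchar : ringChar F = pp := by
    haveI : CharP F (ringChar F) := ringChar.charP F
    have hr : Nat.Prime (ringChar F) := CharP.char_is_prime F (ringChar F)
    obtain ⟨n, hn, hc⟩ := FiniteField.card F (ringChar F)
    rw [hcard] at hc
    have hdvd : ringChar F ∣ pp ^ (k + k) := hc ▸ dvd_pow_self (ringChar F) (by positivity)
    exact (Nat.prime_dvd_prime_iff_eq hr hpp).mp (hr.dvd_of_dvd_pow hdvd)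
  haveI : CharP F pp := hchar ▸ ringChar.charP F
  letI : Algebra (ZMod pp) F := ZMod.algebra F pp
  have hrank : Module.finrank (ZMod pp) F = k + k := by
    have h : Fintype.card F = pp ^ Module.finrank (ZMod pp) F := by
      rw [Module.card_eq_pow_finrank (K := ZMod pp), ZMod.card]
    exact Nat.pow_right_injective hpp.two_le (h.symm.trans hcard)
  let b := Module.finBasisOfFinrankEq (ZMod pp) F hrank
  let e : F ≃+ ((Fin k → ZMod pp) × (Fin k → ZMod pp)) :=
    b.equivFun.toAddEquiv.trans (splitEquiv pp k)
  have hKcard : Fintype.card (Fin k → ZMod pp) = q := by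
    rw [Fintype.card_fun, ZMod.card, Fintype.card_fin, hpk]
  -- the solver
  set sol : F → (Fin k → ZMod pp) → (Fin k → ZMod pp) → F := fun s a b => e.symm (a, (e s).2 - b) with hsol
  have sol_fst : ∀ s a b, (e (sol s a b)).1 = a := by
    intro s a b; simp [hsol]
  have sol_snd : ∀ s a b, (e (s - sol s a b)).2 = b := by
    intro s a b; simp [hsol, map_sub]
  -- the color type
  have hC : Fintype.card (F × (Fin (m - 1) → (Fin k → ZMod pp))) = q ^ (m + 1) := by
    rw [Fintype.card_prod, hF, Fintype.card_fun, hKcard, Fintype.card_fin, ← pow_add]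
    congr 1
    omega
  let eqC : (F × (Fin (m - 1) → (Fin k → ZMod pp))) ≃ Fin (q ^ (m + 1)) :=
    Fintype.equivFinOfCardEq hC
  -- the coloring
  let col : ((Fin m → F) ⊕ (Fin m → F)) → (F × (Fin (m - 1) → (Fin k → ZMod pp))) := fun v =>
    match v with
    | Sum.inl p => (p ⟨0, hm0⟩, fun i => (e (p ⟨(i : ℕ) + 1, by have := i.isLt; omega⟩)).1)
    | Sum.inr l => (l ⟨0, hm0⟩, fun i => (e (l ⟨(i : ℕ) + 1, by have := i.isLt; omega⟩)).2)
  let c : ((Fin m → F) ⊕ (Fin m → F)) → Fin (q ^ (m + 1)) := fun v => eqC (col v)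
  have hcomplete : IsCompletePartition (algGraph m F f) c := by
    intro i j hij
    set x := eqC.symm i with hx
    set y := eqC.symm j with hy
    set a' : ℕ → (Fin k → ZMod pp) := fun t => if h : t - 1 < m - 1 then x.2 ⟨t - 1, h⟩ else 0 with ha'
    set b' : ℕ → (Fin k → ZMod pp) := fun t => if h : t - 1 < m - 1 then y.2 ⟨t - 1, h⟩ else 0 with hb'
    set step : ℕ → F → F × F :=
      fun t s => (sol s (a' t) (b' t), s - sol s (a' t) (b' t)) with hstepdef
    have hstep : ∀ t s, t ≠ 0 → (step t s).1 + (step t s).2 = s := by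
      intro t s _; simp [hstepdef]
    set P : Fin m → F := fun j => (AlgAux.bv f step (x.1, y.1) m j).1 with hP
    set L : Fin m → F := fun j => (AlgAux.bv f step (x.1, y.1) m j).2 with hL
    have hR : AlgAux.R f P L := AlgAux.bv_R f step hstep (x.1, y.1)
    have hPL : ∀ (jv : ℕ) (hj1 : 0 < jv) (hj : jv < m),
        P ⟨jv, hj⟩ = sol (f ⟨jv, hj⟩
            (fun i => (AlgAux.bv f step (x.1, y.1) m ⟨i, i.isLt.trans hj⟩).2)
            (fun i => (AlgAux.bv f step (x.1, y.1) m ⟨i, i.isLt.trans hj⟩).1))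
          (a' jv) (b' jv) ∧
        L ⟨jv, hj⟩ = (f ⟨jv, hj⟩
            (fun i => (AlgAux.bv f step (x.1, y.1) m ⟨i, i.isLt.trans hj⟩).2)
            (fun i => (AlgAux.bv f step (x.1, y.1) m ⟨i, i.isLt.trans hj⟩).1)) -
          sol (f ⟨jv, hj⟩
            (fun i => (AlgAux.bv f step (x.1, y.1) m ⟨i, i.isLt.trans hj⟩).2)
            (fun i => (AlgAux.bv f step (x.1, y.1) m ⟨i, i.isLt.trans hj⟩).1))
          (a' jv) (b' jv) := by
      intro jv hj1 hj
      constructor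
      · show (AlgAux.bv f step (x.1, y.1) m ⟨jv, hj⟩).1 = _
        rw [AlgAux.bv_eval f step (x.1, y.1) m jv hj (by omega) hj]
      · show (AlgAux.bv f step (x.1, y.1) m ⟨jv, hj⟩).2 = _
        rw [AlgAux.bv_eval f step (x.1, y.1) m jv hj (by omega) hj]
    have hcolP : col (Sum.inl P) = x := by
      refine Prod.ext ?_ ?_
      · show P ⟨0, hm0⟩ = x.1
        exact congrArg Prod.fst (AlgAux.bv_zero f step (x.1, y.1) m hm0)
      · funext i'
        show (e (P ⟨(i' : ℕ) + 1, _⟩)).1 = x.2 i'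
        rw [(hPL ((i' : ℕ) + 1) (by omega) (by have := i'.isLt; omega)).1, sol_fst]
        rw [ha']
        simp only [Nat.add_sub_cancel]
        rw [dif_pos i'.isLt]
    have hcolL : col (Sum.inr L) = y := by
      refine Prod.ext ?_ ?_
      · show L ⟨0, hm0⟩ = y.1
        exact congrArg Prod.snd (AlgAux.bv_zero f step (x.1, y.1) m hm0)
      · funext i'
        show (e (L ⟨(i' : ℕ) + 1, _⟩)).2 = y.2 i'
        rw [(hPL ((i' : ℕ) + 1) (by omega) (by have := i'.isLt; omega)).2, sol_snd]
        rw [hb']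
        simp only [Nat.add_sub_cancel]
        rw [dif_pos i'.isLt]
    refine ⟨Sum.inl P, Sum.inr L, ?_, ?_, ?_⟩
    · show eqC (col (Sum.inl P)) = i
      rw [hcolP, hx, Equiv.apply_symm_apply]
    · show eqC (col (Sum.inr L)) = j
      rw [hcolL, hy, Equiv.apply_symm_apply]
    · rw [algGraph, SimpleGraph.fromRel_adj]
      exact ⟨by simp, Or.inl ⟨P, L, rfl, rfl, hR⟩⟩
  have hpart1 : ∃ c : ((Fin m → F) ⊕ (Fin m → F)) → Fin (q ^ (m + 1)),
      IsCompletePartition (algGraph m F f) c := ⟨c, hcomplete⟩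
  -- edge count
  have hrange : (algGraph m F f).edgeSet =
      Set.range (fun x : (Fin m → F) × F =>
        s(Sum.inl (AlgAux.nbr hm0 f x.1 x.2), Sum.inr x.1)) := by
    ext ed
    induction ed using Sym2.ind with
    | _ xv yv =>
      rw [SimpleGraph.mem_edgeSet, algGraph, SimpleGraph.fromRel_adj]
      constructor
      · rintro ⟨hne, ⟨p, l, rfl, rfl, hR⟩ | ⟨p, l, rfl, rfl, hR⟩⟩
        · refine ⟨(l, p ⟨0, hm0⟩), ?_⟩
          show s(Sum.inl (AlgAux.nbr hm0 f l (p ⟨0, hm0⟩)), Sum.inr l) = _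
          rw [AlgAux.nbr_eq hm0 f p l hR]
        · refine ⟨(l, p ⟨0, hm0⟩), ?_⟩
          show s(Sum.inl (AlgAux.nbr hm0 f l (p ⟨0, hm0⟩)), Sum.inr l) = _
          rw [AlgAux.nbr_eq hm0 f p l hR]
          exact Sym2.eq_swap
      · rintro ⟨⟨l, t⟩, h⟩
        simp only [Sym2.eq_iff] at h
        rcases h with ⟨h1, h2⟩ | ⟨h1, h2⟩
        · exact ⟨by rw [← h1, ← h2]; simp, Or.inl ⟨AlgAux.nbr hm0 f l t, l, h1.symm, h2.symm,
            AlgAux.nbr_R hm0 f l t⟩⟩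
        · exact ⟨by rw [← h1, ← h2]; simp, Or.inr ⟨AlgAux.nbr hm0 f l t, l, h1.symm, h2.symm,
            AlgAux.nbr_R hm0 f l t⟩⟩
  have hginj : Function.Injective (fun x : (Fin m → F) × F =>
      s(Sum.inl (AlgAux.nbr hm0 f x.1 x.2), Sum.inr x.1)) := by
    rintro ⟨l, t⟩ ⟨l', t'⟩ h
    simp only [Sym2.eq_iff] at h
    rcases h with ⟨h1, h2⟩ | ⟨h1, h2⟩
    · have hl : l = l' := by simpa using h2
      subst hl
      have hn : AlgAux.nbr hm0 f l t = AlgAux.nbr hm0 f l t' := by simpa using h1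
      have : t = t' := by
        rw [← AlgAux.nbr_zero hm0 f l t, ← AlgAux.nbr_zero hm0 f l t', hn]
      rw [this]
    · exact absurd h1 (by simp)
  have hcount : (algGraph m F f).edgeSet.ncard = q ^ (2 * m + 2) := by
    rw [hrange, ← Set.image_univ, Set.ncard_image_of_injective _ hginj, Set.ncard_univ,
      Nat.card_eq_fintype_card, Fintype.card_prod, Fintype.card_fun, hF, Fintype.card_fin,
      ← pow_mul, ← pow_add]
  refine ⟨hpart1, ?_, hcount, ?_⟩
  · -- pseudoachromatic bound
    have hbdd : BddAbove {r : ℕ | ∃ c : ((Fin m → F) ⊕ (Fin m → F)) → Fin r,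
        IsCompletePartition (algGraph m F f) c} := by
      refine ⟨Fintype.card ((Fin m → F) ⊕ (Fin m → F)), ?_⟩
      rintro r ⟨c', hc'⟩
      rcases le_or_gt r 1 with hr | hr
      · calc r ≤ 1 := hr
          _ ≤ _ := Fintype.card_pos
      · have hsurj : Function.Surjective c' := by
          intro i
          obtain ⟨j, hj⟩ := Fintype.exists_ne_of_one_lt_card (by simpa using hr) i
          obtain ⟨u, v, hu, hv, _⟩ := hc' j i hj
          exact ⟨v, hv⟩
        simpa using Fintype.card_le_of_surjective c' hsurj
    exact le_csSup hbdd hpart1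
  · rw [hcount]
    have h2 : q ^ (2 * m + 2) = (q ^ (m + 1)) ^ 2 := by
      rw [← pow_mul]
      congr 1
      omega
    rw [h2, Nat.sqrt_eq']
end
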